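/- arXiv:2406.13277 — 3 statements merged into one kernel-verified Lean document; each statement's English description precedes it below -/
import Mathlib

section
/- Every connected component of a minimal subgraph of ℤⁿ is itself a minimal subgraph. -/
open Set

/-- Vertices of the integer lattice `ℤⁿ`. -/
abbrev Vtx (n : ℕ) := Fin n → ℤ

/-- Adjacency in the integer lattice: Euclidean (equivalently ℓ¹) distance one. -/
def ZAdj {n : ℕ} (x y : Vtx n) : Prop := (∑ i, (x i - y i).natAbs) = 1

/-- Exterior vertex boundary. -/
def extB {n : ℕ} (Ω : Set (Vtx n)) : Set (Vtx n) := {z | z ∉ Ω ∧ ∃ w ∈ Ω, ZAdj z w}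

/-- Closure `Ω̄ = Ω ∪ τΩ`. -/
def clos {n : ℕ} (Ω : Set (Vtx n)) : Set (Vtx n) := Ω ∪ extB Ω

/-- Directed version of `E_Ω = E(Ω, Ω̄)`. -/
def dirE {n : ℕ} (Ω : Set (Vtx n)) : Set (Vtx n × Vtx n) :=
  {p | ZAdj p.1 p.2 ∧ p.1 ∈ clos Ω ∧ p.2 ∈ clos Ω ∧ (p.1 ∈ Ω ∨ p.2 ∈ Ω)}

/-- Directed edge boundary of `F`; each undirected boundary edge is counted once. -/
def dirBdry {n : ℕ} (F : Set (Vtx n)) : Set (Vtx n × Vtx n) :=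
  {p | ZAdj p.1 p.2 ∧ p.1 ∈ F ∧ p.2 ∉ F}

/-- `M ⊆ ℤⁿ` is a minimal (area-minimizing) subgraph. -/
def IsMinimal {n : ℕ} (M : Set (Vtx n)) : Prop :=
  ∀ Ω : Set (Vtx n), Ω.Finite → ∀ F : Set (Vtx n), symmDiff F M ⊆ Ω →
    (dirBdry M ∩ dirE Ω).ncard ≤ (dirBdry F ∩ dirE Ω).ncard

/-- Vertex boundary `δM`. -/
def vB {n : ℕ} (M : Set (Vtx n)) : Set (Vtx n) := {x | x ∈ M ∧ ∃ y, y ∉ M ∧ ZAdj x y}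

/-- Degree of `x` in the subgraph induced on `M`. -/
noncomputable def degIn {n : ℕ} (M : Set (Vtx n)) (x : Vtx n) : ℕ :=
  ({y | y ∈ M ∧ ZAdj x y}).ncard

/-- Combinatorial (graph) distance in `ℤⁿ`, which equals the ℓ¹ distance. -/
def latDist {n : ℕ} (x y : Vtx n) : ℕ := ∑ i, (x i - y i).natAbs

/-- The ∞-normed ball `B̂_r(x)`. -/
def Bhat {n : ℕ} (x : Vtx n) (r : ℕ) : Set (Vtx n) := {y | ∀ i, (y i - x i).natAbs ≤ r}

/-- The set of vertices of `M` lying in some unit `n`-cube all of whose vertices are in `M`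
(the vertices of the `n`-skeleton `Mⁿ`). -/
def skel {n : ℕ} (M : Set (Vtx n)) : Set (Vtx n) :=
  {x | x ∈ M ∧ ∃ v : Vtx n, (∀ i, x i = v i ∨ x i = v i + 1) ∧
    ∀ y : Vtx n, (∀ i, y i = v i ∨ y i = v i + 1) → y ∈ M}

lemma zadj_symm {n : ℕ} {x y : Vtx n} (h : ZAdj x y) : ZAdj y x := by
  unfold ZAdj at *
  rw [← h]
  exact Finset.sum_congr rfl fun i _ => by omega

lemma nbr_finite {n : ℕ} (x : Vtx n) : {y : Vtx n | ZAdj x y}.Finite := by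
  have hfin : (Set.pi Set.univ (fun i => ({x i - 1, x i, x i + 1} : Set ℤ))).Finite :=
    Set.Finite.pi fun i => (finite_singleton _).insert _ |>.insert _
  refine hfin.subset ?_
  intro y hy i _
  have h1 : (x i - y i).natAbs ≤ 1 := by
    rw [show (1:ℕ) = ∑ j, (x j - y j).natAbs from hy.symm]
    exact Finset.single_le_sum (f := fun j => (x j - y j).natAbs)
      (fun j _ => Nat.zero_le _) (Finset.mem_univ i)
  have : y i = x i - 1 ∨ y i = x i ∨ y i = x i + 1 := by omega
  simpa using this

lemma dirE_finite {n : ℕ} {Ω : Set (Vtx n)} (hΩ : Ω.Finite) : (dirE Ω).Finite := by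
  have h1 : (⋃ x ∈ Ω, ({x} : Set (Vtx n)) ×ˢ {y | ZAdj x y}).Finite :=
    hΩ.biUnion fun x _ => (finite_singleton x).prod (nbr_finite x)
  have h2 : (⋃ x ∈ Ω, {y : Vtx n | ZAdj x y} ×ˢ ({x} : Set (Vtx n))).Finite :=
    hΩ.biUnion fun x _ => (nbr_finite x).prod (finite_singleton x)
  refine (h1.union h2).subset ?_
  rintro ⟨a, b⟩ ⟨hadj, -, -, hab⟩
  rcases hab with ha | hb
  · exact Or.inl (Set.mem_biUnion ha ⟨rfl, hadj⟩)
  · exact Or.inr (Set.mem_biUnion hb ⟨zadj_symm hadj, rfl⟩)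

/-- every connected component of a minimal subgraph of `ℤⁿ` is minimal. -/
theorem component_minimal {n : ℕ} (M : Set (Vtx n)) (hM : IsMinimal M)
    (v : Vtx n) (hv : v ∈ M) :
    IsMinimal {w | Relation.ReflTransGen (fun a b => a ∈ M ∧ b ∈ M ∧ ZAdj a b) v w} := by
  set C : Set (Vtx n) :=
    {w | Relation.ReflTransGen (fun a b => a ∈ M ∧ b ∈ M ∧ ZAdj a b) v w} with hC
  have hCM : C ⊆ M := by
    intro w hw
    induction hw with
    | refl => exact hv
    | tail _ h _ => exact h.2.1
  -- closure of C under adjacency within M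
  have hclos : ∀ x ∈ C, ∀ y ∈ M, ZAdj x y → y ∈ C := fun x hx y hy hadj =>
    Relation.ReflTransGen.tail hx ⟨hCM hx, hy, hadj⟩
  intro Ω hΩ F hF
  set E := dirE Ω with hE
  have hEfin : E.Finite := dirE_finite hΩ
  set S : Set (Vtx n) := M \ C with hS
  have hMdecomp : M = C ∪ S := (Set.union_diff_cancel hCM).symm
  -- F' = F ∪ S
  have hF' : symmDiff (F ∪ S) M ⊆ Ω := by
    intro x hx
    rw [Set.mem_symmDiff] at hx
    apply hF
    rw [Set.mem_symmDiff]
    rcases hx with ⟨hx1, hx2⟩ | ⟨hx1, hx2⟩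
    · rw [hMdecomp] at hx2
      rcases hx1 with h | h
      · exact Or.inl ⟨h, fun hc => hx2 (Or.inl hc)⟩
      · exact absurd (Or.inr h) hx2
    · rw [hMdecomp] at hx1
      rcases hx1 with h | h
      · exact Or.inr ⟨h, fun hf => hx2 (Or.inl hf)⟩
      · exact absurd h (fun h => hx2 (Or.inr h))
  have hMain := hM Ω hΩ (F ∪ S) hF'
  rw [← hE] at hMain
  -- dirBdry M ∩ E decomposes
  have hsplit : dirBdry M ∩ E = (dirBdry C ∩ E) ∪ (dirBdry S ∩ E) := by
    ext ⟨a, b⟩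
    constructor
    · rintro ⟨⟨hadj, haM, hbM⟩, hEp⟩
      by_cases hac : a ∈ C
      · exact Or.inl ⟨⟨hadj, hac, fun hbc => hbM (hCM hbc)⟩, hEp⟩
      · refine Or.inr ⟨⟨hadj, ⟨haM, hac⟩, ?_⟩, hEp⟩
        rintro ⟨hbM', -⟩
        exact hbM hbM'
    · rintro (⟨⟨hadj, haC, hbC⟩, hEp⟩ | ⟨⟨hadj, haS, hbS⟩, hEp⟩)
      · refine ⟨⟨hadj, hCM haC, fun hbM => hbC (hclos a haC b hbM hadj)⟩, hEp⟩
      · refine ⟨⟨hadj, haS.1, fun hbM => hbS ⟨hbM, ?_⟩⟩, hEp⟩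
        intro hbC
        exact haS.2 (hclos b hbC a haS.1 (zadj_symm hadj))
  have hdisj : Disjoint (dirBdry C ∩ E) (dirBdry S ∩ E) := by
    rw [Set.disjoint_left]
    rintro ⟨a, b⟩ ⟨⟨-, haC, -⟩, -⟩ ⟨⟨-, haS, -⟩, -⟩
    exact haS.2 haC
  have hcard : (dirBdry M ∩ E).ncard = (dirBdry C ∩ E).ncard + (dirBdry S ∩ E).ncard := by
    rw [hsplit]
    exact Set.ncard_union_eq hdisj (hEfin.subset Set.inter_subset_right)
      (hEfin.subset Set.inter_subset_right)
  -- boundary of union is contained in union of boundaries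
  have hsub : dirBdry (F ∪ S) ∩ E ⊆ (dirBdry F ∩ E) ∪ (dirBdry S ∩ E) := by
    rintro ⟨a, b⟩ ⟨⟨hadj, ha, hb⟩, hEp⟩
    rcases ha with haF | haS
    · exact Or.inl ⟨⟨hadj, haF, fun hbF => hb (Or.inl hbF)⟩, hEp⟩
    · exact Or.inr ⟨⟨hadj, haS, fun hbS => hb (Or.inr hbS)⟩, hEp⟩
  have h2 : (dirBdry (F ∪ S) ∩ E).ncard ≤ (dirBdry F ∩ E).ncard + (dirBdry S ∩ E).ncard := by
    calc (dirBdry (F ∪ S) ∩ E).ncard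
        ≤ ((dirBdry F ∩ E) ∪ (dirBdry S ∩ E)).ncard :=
          Set.ncard_le_ncard hsub ((hEfin.subset Set.inter_subset_right).union
            (hEfin.subset Set.inter_subset_right))
      _ ≤ (dirBdry F ∩ E).ncard + (dirBdry S ∩ E).ncard := Set.ncard_union_le _ _
  omega
end

section
/- Let M be a minimal subgraph of ℤ². If x,y∈M lie on a common horizontal or vertical line and belong to the same connected component of the subgraph induced on M, then every lattice point on the segment between x and y belongs to M. -/
open Set

namespace SegAux

/-! ### Coordinate helpers -/

/-- build a point of `ℤ²` from its `i`-th and `j`-th coordinates -/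
def mkp (i j : Fin 2) (r s : ℤ) : Vtx 2 := fun t => if t = i then r else s

lemma mkp_i (i j : Fin 2) (r s : ℤ) : mkp i j r s i = r := if_pos rfl

lemma mkp_j (i j : Fin 2) (hij : j ≠ i) (r s : ℤ) : mkp i j r s j = s := if_neg hij

lemma vext (i j : Fin 2) (hij : j ≠ i) {u v : Vtx 2} (h1 : u i = v i) (h2 : u j = v j) :
    u = v := by
  funext t
  have hval : (j : ℕ) ≠ (i : ℕ) := fun h => hij (Fin.ext h)
  have hi := i.isLt; have hj := j.isLt; have ht := t.isLt
  have : (t : ℕ) = (i : ℕ) ∨ (t : ℕ) = (j : ℕ) := by omega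
  rcases this with h | h
  · rwa [show t = i from Fin.ext h]
  · rwa [show t = j from Fin.ext h]

lemma sum_two (i j : Fin 2) (hij : j ≠ i) (f : Fin 2 → ℕ) : (∑ t, f t) = f i + f j := by
  have hvalne : (j : ℕ) ≠ (i : ℕ) := fun h => hij (Fin.ext h)
  have hi := i.isLt; have hj := j.isLt
  have : ((i : ℕ) = 0 ∧ (j : ℕ) = 1) ∨ ((i : ℕ) = 1 ∧ (j : ℕ) = 0) := by omega
  rcases this with ⟨h1, h2⟩ | ⟨h1, h2⟩
  · rw [show i = 0 from Fin.ext h1, show j = 1 from Fin.ext h2, Fin.sum_univ_two]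
  · rw [show i = 1 from Fin.ext h1, show j = 0 from Fin.ext h2, Fin.sum_univ_two,
      Nat.add_comm]

lemma zadj_iff (i j : Fin 2) (hij : j ≠ i) (u v : Vtx 2) :
    ZAdj u v ↔ (u i - v i).natAbs + (u j - v j).natAbs = 1 := by
  unfold ZAdj
  rw [sum_two i j hij]

/-! ### The mod-2 crossing number -/

noncomputable def crossI (i j : Fin 2) (v w u : Vtx 2) : ZMod 2 :=
  if v i = w i ∧ v i ≤ u i ∧ ((v j = u j ∧ w j = u j + 1) ∨ (w j = u j ∧ v j = u j + 1))
  then 1 else 0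

noncomputable def segI (i j : Fin 2) (mA mB c : ℤ) (u : Vtx 2) : ZMod 2 :=
  if c ≤ u i ∧ mA ≤ u j ∧ u j < mB then 1 else 0

noncomputable def GG (i j : Fin 2) (p : ℕ → Vtx 2) (k : ℕ) (mA mB c : ℤ) (u : Vtx 2) :
    ZMod 2 :=
  (∑ m ∈ Finset.range k, crossI i j (p m) (p (m+1)) u) + segI i j mA mB c u

noncomputable def psiI (i j : Fin 2) (u : Vtx 2) (t : Vtx 2) : ZMod 2 :=
  if t j = u j + 1 ∧ t i ≤ u i then 1 else 0

lemma telescope (g : ℕ → ZMod 2) (k : ℕ) :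
    (∑ m ∈ Finset.range k, (g m + g (m+1))) = g 0 + g k := by
  induction k with
  | zero => simp [CharTwo.add_self_eq_zero]
  | succ k ih =>
      rw [Finset.sum_range_succ, ih,
        show g 0 + g k + (g k + g (k+1)) = g 0 + (g k + g k) + g (k+1) by ring,
        CharTwo.add_self_eq_zero, add_zero]

/-- per-edge identity for a horizontal move of the base point -/
lemma per_edge (i j : Fin 2) (v w u : Vtx 2)
    (hadj : (v i - w i).natAbs + (v j - w j).natAbs = 1)
    (hv : ¬(v i = u i ∧ v j = u j + 1)) (hw : ¬(w i = u i ∧ w j = u j + 1))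
    (u' : Vtx 2) (hu'i : u' i = u i) (hu'j : u' j = u j + 1) :
    crossI i j v w u + crossI i j v w u' = psiI i j u v + psiI i j u w := by
  unfold crossI psiI
  rw [hu'i, hu'j]
  split_ifs <;> first | decide | (exfalso; omega)

/-- horizontal step invariance -/
lemma G_hstep (i j : Fin 2) (p : ℕ → Vtx 2) (k : ℕ)
    (hpadj : ∀ m, m < k → (p m i - p (m+1) i).natAbs + (p m j - p (m+1) j).natAbs = 1)
    (a b c mA mB : ℤ) (hmm : (mA = a ∧ mB = b) ∨ (mA = b ∧ mB = a)) (hord : mA ≤ mB)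
    (h0i : p 0 i = c) (h0j : p 0 j = a) (hki : p k i = c) (hkj : p k j = b)
    (u u' : Vtx 2) (hu'i : u' i = u i) (hu'j : u' j = u j + 1)
    (hvert : ∀ m, m ≤ k → ¬(p m i = u i ∧ p m j = u j + 1)) :
    GG i j p k mA mB c u = GG i j p k mA mB c u' := by
  have hsum : (∑ m ∈ Finset.range k, crossI i j (p m) (p (m+1)) u)
      + (∑ m ∈ Finset.range k, crossI i j (p m) (p (m+1)) u')
      = psiI i j u (p 0) + psiI i j u (p k) := by
    rw [← Finset.sum_add_distrib, ← telescope (fun m => psiI i j u (p m)) k]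
    apply Finset.sum_congr rfl
    intro m hm
    have hm' := Finset.mem_range.mp hm
    exact per_edge i j (p m) (p (m+1)) u (hpadj m hm')
      (hvert m (Nat.le_of_lt hm')) (hvert (m+1) hm') u' hu'i hu'j
  have hfin : psiI i j u (p 0) + psiI i j u (p k) + segI i j mA mB c u
      + segI i j mA mB c u' = 0 := by
    unfold psiI segI
    rw [hu'i, hu'j, h0i, h0j, hki, hkj]
    split_ifs <;> first | decide | (exfalso; omega)
  have : GG i j p k mA mB c u + GG i j p k mA mB c u' = 0 := by
    unfold GG
    calc (∑ m ∈ Finset.range k, crossI i j (p m) (p (m+1)) u) + segI i j mA mB c u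
        + ((∑ m ∈ Finset.range k, crossI i j (p m) (p (m+1)) u') + segI i j mA mB c u')
        = ((∑ m ∈ Finset.range k, crossI i j (p m) (p (m+1)) u)
          + (∑ m ∈ Finset.range k, crossI i j (p m) (p (m+1)) u'))
          + segI i j mA mB c u + segI i j mA mB c u' := by ring
      _ = psiI i j u (p 0) + psiI i j u (p k) + segI i j mA mB c u
          + segI i j mA mB c u' := by rw [hsum]
      _ = 0 := hfin
  rw [← CharTwo.sub_eq_add] at this
  exact sub_eq_zero.mp this

/-- vertical step invariance -/
lemma G_vstep (i j : Fin 2) (p : ℕ → Vtx 2) (k : ℕ)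
    (mA mB c : ℤ)
    (u u' : Vtx 2) (hu'i : u' i = u i + 1) (hu'j : u' j = u j)
    (hvert : ∀ m, m ≤ k → ¬(p m i = u i + 1 ∧ p m j = u j))
    (hseg : ¬(u i + 1 = c ∧ mA ≤ u j ∧ u j < mB)) :
    GG i j p k mA mB c u = GG i j p k mA mB c u' := by
  unfold GG
  have h1 : (∑ m ∈ Finset.range k, crossI i j (p m) (p (m+1)) u)
      = ∑ m ∈ Finset.range k, crossI i j (p m) (p (m+1)) u' := by
    apply Finset.sum_congr rfl
    intro m hm
    have hm' := Finset.mem_range.mp hm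
    have hv := hvert m (Nat.le_of_lt hm')
    have hw := hvert (m+1) hm'
    unfold crossI
    rw [hu'i, hu'j]
    split_ifs <;> first | rfl | (exfalso; omega)
  have h2 : segI i j mA mB c u = segI i j mA mB c u' := by
    unfold segI
    rw [hu'i, hu'j]
    split_ifs <;> first | rfl | (exfalso; omega)
  rw [h1, h2]

/-- opposite parity across a segment gap -/
lemma G_gap (i j : Fin 2) (p : ℕ → Vtx 2) (k : ℕ)
    (mA mB c : ℤ) (g up dn : Vtx 2)
    (hgj1 : mA ≤ g j) (hgj2 : g j < mB)
    (hupi : up i = c + 1) (hupj : up j = g j)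
    (hdni : dn i = c - 1) (hdnj : dn j = g j)
    (hvg : ∀ m, m ≤ k → ¬(p m i = c ∧ p m j = g j))
    (hvu : ∀ m, m ≤ k → ¬(p m i = c + 1 ∧ p m j = g j)) :
    GG i j p k mA mB c up = GG i j p k mA mB c dn + 1 := by
  unfold GG
  have h1 : (∑ m ∈ Finset.range k, crossI i j (p m) (p (m+1)) up)
      = ∑ m ∈ Finset.range k, crossI i j (p m) (p (m+1)) dn := by
    apply Finset.sum_congr rfl
    intro m hm
    have hm' := Finset.mem_range.mp hm
    have hv1 := hvg m (Nat.le_of_lt hm'); have hw1 := hvg (m+1) hm'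
    have hv2 := hvu m (Nat.le_of_lt hm'); have hw2 := hvu (m+1) hm'
    unfold crossI
    rw [hupi, hupj, hdni, hdnj]
    split_ifs <;> first | rfl | (exfalso; omega)
  have h2 : segI i j mA mB c up = 1 := by
    unfold segI
    rw [hupi, hupj]
    rw [if_pos ⟨by omega, hgj1, hgj2⟩]
  have h3 : segI i j mA mB c dn = 0 := by
    unfold segI
    rw [hdni, hdnj]
    rw [if_neg (by omega)]
  rw [h1, h2, h3, add_zero]

/-! ### vanishing of `GG` far away -/

lemma G_zero_col (i j : Fin 2) (p : ℕ → Vtx 2) (k : ℕ) (mA mB c : ℤ) (u : Vtx 2)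
    (h : ∀ m, m ≤ k → p m j ≠ u j) (hseg : ¬(mA ≤ u j ∧ u j < mB)) :
    GG i j p k mA mB c u = 0 := by
  unfold GG segI
  rw [if_neg (by tauto), add_zero]
  apply Finset.sum_eq_zero
  intro m hm
  have hm' := Finset.mem_range.mp hm
  have h1 := h m (Nat.le_of_lt hm'); have h2 := h (m+1) hm'
  unfold crossI
  rw [if_neg (by tauto)]

lemma G_zero_row_low (i j : Fin 2) (p : ℕ → Vtx 2) (k : ℕ) (mA mB c : ℤ) (u : Vtx 2)
    (h : ∀ m, m ≤ k → ¬(p m i ≤ u i)) (hc : ¬(c ≤ u i)) :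
    GG i j p k mA mB c u = 0 := by
  unfold GG segI
  rw [if_neg (by tauto), add_zero]
  apply Finset.sum_eq_zero
  intro m hm
  have hm' := Finset.mem_range.mp hm
  have h1 := h m (Nat.le_of_lt hm')
  unfold crossI
  rw [if_neg (by tauto)]

lemma G_zero_row_high (i j : Fin 2) (hij : j ≠ i) (p : ℕ → Vtx 2) (k : ℕ)
    (hpadj : ∀ m, m < k → (p m i - p (m+1) i).natAbs + (p m j - p (m+1) j).natAbs = 1)
    (a b c mA mB : ℤ) (hmm : (mA = a ∧ mB = b) ∨ (mA = b ∧ mB = a)) (hord : mA ≤ mB)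
    (h0i : p 0 i = c) (h0j : p 0 j = a) (hki : p k i = c) (hkj : p k j = b)
    (B : ℤ) (hbi : ∀ m, m ≤ k → p m i ≤ c + k) (hbj : ∀ m, m ≤ k → p m j ≤ B)
    (hmB : mB ≤ B + 1)
    (u : Vtx 2) (hui : c + k < u i) :
    GG i j p k mA mB c u = 0 := by
  have hbase : ∀ v : Vtx 2, B < v j → GG i j p k mA mB c v = 0 := by
    intro v hv
    apply G_zero_col i j p k mA mB c v
    · intro m hm
      have := hbj m hm; omega
    · omega
  have main : ∀ n : ℕ, ∀ u : Vtx 2, (B + 1 - u j).toNat ≤ n → c + k < u i →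
      GG i j p k mA mB c u = 0 := by
    intro n
    induction n with
    | zero =>
        intro u hn hu
        exact hbase u (by omega)
    | succ n ih =>
        intro u hn hu
        by_cases hB : B < u j
        · exact hbase u hB
        · push_neg at hB
          set u' : Vtx 2 := mkp i j (u i) (u j + 1) with hu'
          have hu'i : u' i = u i := mkp_i i j _ _
          have hu'j : u' j = u j + 1 := mkp_j i j hij _ _
          rw [G_hstep i j p k hpadj a b c mA mB hmm hord h0i h0j hki hkj u u' hu'i hu'j
            (fun m hm => by have := hbi m hm; omega)]
          exact ih u' (by omega) (by omega)
  exact main ((B + 1 - u j).toNat) u le_rfl hui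

/-- points where `GG` is `1` lie in a bounded box -/
lemma G_one_bounded (i j : Fin 2) (hij : j ≠ i) (p : ℕ → Vtx 2) (k : ℕ)
    (hpadj : ∀ m, m < k → (p m i - p (m+1) i).natAbs + (p m j - p (m+1) j).natAbs = 1)
    (a b c mA mB : ℤ) (hmm : (mA = a ∧ mB = b) ∨ (mA = b ∧ mB = a)) (hord : mA ≤ mB)
    (h0i : p 0 i = c) (h0j : p 0 j = a) (hki : p k i = c) (hkj : p k j = b)
    (hbnd : ∀ m, m ≤ k → (p m i - c).natAbs ≤ k ∧ (p m j - a).natAbs ≤ k)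
    (u : Vtx 2) (hG : GG i j p k mA mB c u = 1) :
    c - k ≤ u i ∧ u i ≤ c + k ∧ a - k - 1 ≤ u j ∧ u j ≤ a + k := by
  have hbk := hbnd k le_rfl
  have hmA : a - k ≤ mA ∧ mB ≤ a + k := by
    rw [hkj] at hbk
    rcases hmm with ⟨h1, h2⟩ | ⟨h1, h2⟩ <;> omega
  by_contra hcon
  have h0 : GG i j p k mA mB c u = 0 := by
    push_neg at hcon
    by_cases h1 : u i < c - k
    · apply G_zero_row_low
      · intro m hm; have := (hbnd m hm).1; omega
      · omega
    · by_cases h2 : c + k < u i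
      · exact G_zero_row_high i j hij p k hpadj a b c mA mB hmm hord h0i h0j hki hkj
          (a + k) (fun m hm => by have := (hbnd m hm).1; omega)
          (fun m hm => by have := (hbnd m hm).2; omega) (by omega) u h2
      · by_cases h3 : u j < a - k - 1
        · apply G_zero_col
          · intro m hm; have := (hbnd m hm).2; omega
          · omega
        · have h4 : a + k < u j := hcon (by omega) (by omega) (by omega)
          apply G_zero_col
          · intro m hm; have := (hbnd m hm).2; omega
          · omega
  rw [hG] at h0
  exact one_ne_zero h0

/-! ### finiteness helpers -/

lemma box_finite (i j : Fin 2) (hij : j ≠ i) (lo1 hi1 lo2 hi2 : ℤ) :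
    {u : Vtx 2 | lo1 ≤ u i ∧ u i ≤ hi1 ∧ lo2 ≤ u j ∧ u j ≤ hi2}.Finite := by
  have hfin : (Set.pi Set.univ (fun t : Fin 2 =>
      Set.Icc (if t = i then lo1 else lo2) (if t = i then hi1 else hi2))).Finite :=
    Set.Finite.pi (fun _ => Set.finite_Icc _ _)
  apply hfin.subset
  intro u hu t _
  by_cases ht : t = i
  · subst ht
    simp only [if_pos rfl, Set.mem_Icc]
    exact ⟨hu.1, hu.2.1⟩
  · have htj : t = j := by
      have hvalne : (j : ℕ) ≠ (i : ℕ) := fun h => hij (Fin.ext h)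
      have hvt : (t : ℕ) ≠ (i : ℕ) := fun h => ht (Fin.ext h)
      have hi := i.isLt; have hj := j.isLt; have ht2 := t.isLt
      exact Fin.ext (by omega)
    subst htj
    simp only [if_neg hij, Set.mem_Icc]
    exact ⟨hu.2.2.1, hu.2.2.2⟩

lemma ball_finite (i j : Fin 2) (hij : j ≠ i) (v : Vtx 2) :
    {u : Vtx 2 | ZAdj u v}.Finite := by
  apply (box_finite i j hij (v i - 1) (v i + 1) (v j - 1) (v j + 1)).subset
  intro u hu
  have := (zadj_iff i j hij u v).mp hu
  simp only [Set.mem_setOf_eq]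
  omega

lemma edges_into_finite (i j : Fin 2) (hij : j ≠ i) (S : Set (Vtx 2)) (hS : S.Finite) :
    {e : Vtx 2 × Vtx 2 | ZAdj e.1 e.2 ∧ e.2 ∈ S}.Finite := by
  have : {e : Vtx 2 × Vtx 2 | ZAdj e.1 e.2 ∧ e.2 ∈ S} ⊆
      ⋃ v ∈ S, {u : Vtx 2 | ZAdj u v} ×ˢ {v} := by
    rintro ⟨u, v⟩ ⟨h1, h2⟩
    exact Set.mem_biUnion h2 ⟨h1, rfl⟩
  exact (Set.Finite.biUnion hS
    (fun v _ => (ball_finite i j hij v).prod (Set.finite_singleton v))).subset this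

lemma edges_from_finite (i j : Fin 2) (hij : j ≠ i) (S : Set (Vtx 2)) (hS : S.Finite) :
    {e : Vtx 2 × Vtx 2 | ZAdj e.1 e.2 ∧ e.1 ∈ S}.Finite := by
  have : {e : Vtx 2 × Vtx 2 | ZAdj e.1 e.2 ∧ e.1 ∈ S} ⊆
      ⋃ v ∈ S, ({v} : Set (Vtx 2)) ×ˢ {u : Vtx 2 | ZAdj v u} := by
    rintro ⟨u, w⟩ ⟨h1, h2⟩
    exact Set.mem_biUnion h2 ⟨rfl, h1⟩
  apply (Set.Finite.biUnion hS (fun v _ => (Set.finite_singleton v).prod ?_)).subset this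
  apply (box_finite i j hij (v i - 1) (v i + 1) (v j - 1) (v j + 1)).subset
  intro u hu
  have := (zadj_iff i j hij v u).mp hu
  simp only [Set.mem_setOf_eq]
  omega

lemma nb_finite (i j : Fin 2) (hij : j ≠ i) (S : Set (Vtx 2)) (hS : S.Finite) :
    {u : Vtx 2 | ∃ w ∈ S, ZAdj u w}.Finite := by
  have : {u : Vtx 2 | ∃ w ∈ S, ZAdj u w} ⊆ ⋃ v ∈ S, {u : Vtx 2 | ZAdj u v} := by
    rintro u ⟨w, hw, h⟩
    exact Set.mem_biUnion hw h
  exact (Set.Finite.biUnion hS (fun v _ => ball_finite i j hij v)).subset this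

/-! ### paths -/

lemma exists_path {α : Type*} (R : α → α → Prop) (x y : α)
    (h : Relation.ReflTransGen R x y) :
    ∃ (k : ℕ) (p : ℕ → α), p 0 = x ∧ p k = y ∧ ∀ m, m < k → R (p m) (p (m+1)) := by
  induction h with
  | refl => exact ⟨0, fun _ => x, rfl, rfl, fun m hm => absurd hm (Nat.not_lt_zero m)⟩
  | @tail b c hxb hbc ih =>
      obtain ⟨k, p, h0, hk, hs⟩ := ih
      refine ⟨k + 1, fun m => if m ≤ k then p m else c, ?_, ?_, ?_⟩
      · simpa using h0
      · simp
      · intro m hm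
        by_cases hmk : m < k
        · simpa [Nat.le_of_lt hmk, Nat.succ_le_of_lt hmk] using hs m hmk
        · have hmk' : m = k := by omega
          subst hmk'
          simpa [hk] using hbc

lemma path_bound (i j : Fin 2) (p : ℕ → Vtx 2) (k : ℕ)
    (hpadj : ∀ m, m < k → (p m i - p (m+1) i).natAbs + (p m j - p (m+1) j).natAbs = 1) :
    ∀ m, m ≤ k → (p m i - p 0 i).natAbs ≤ m ∧ (p m j - p 0 j).natAbs ≤ m := by
  intro m
  induction m with
  | zero => intro _; simp
  | succ m ih =>
      intro hm
      have h1 := ih (by omega)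
      have h2 := hpadj m (by omega)
      omega

end SegAux

open SegAux in
/-- if `x, y` in a minimal subgraph `M ⊆ ℤ²` lie on a common horizontal or
vertical line and are in the same connected component of `M`, then every lattice point of the
segment between them lies in `M`. -/
theorem segment_in_minimal {M : Set (Vtx 2)} (hM : IsMinimal M)
    (x y : Vtx 2) (hx : x ∈ M) (hy : y ∈ M)
    (hcomp : Relation.ReflTransGen (fun a b => a ∈ M ∧ b ∈ M ∧ ZAdj a b) x y)
    (i : Fin 2) (hline : x i = y i)
    (z : Vtx 2) (hzi : z i = x i)
    (hz : ∀ j, j ≠ i → min (x j) (y j) ≤ z j ∧ z j ≤ max (x j) (y j)) :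
    z ∈ M := by
  classical
  set j : Fin 2 := ⟨1 - (i : ℕ), by omega⟩ with hjdef
  have hij : j ≠ i := by
    intro h
    have hcv : ((j : ℕ)) = (i : ℕ) := congrArg Fin.val h
    have hi := i.isLt
    simp only [hjdef] at hcv
    omega
  obtain ⟨hz1, hz2⟩ := hz j hij
  by_contra hzM
  obtain ⟨k, p, hp0, hpk, hpstep⟩ := exists_path _ x y hcomp
  have hpmem : ∀ m, m ≤ k → p m ∈ M := by
    intro m hm
    rcases Nat.lt_or_ge m k with h | h
    · exact (hpstep m h).1
    · have hmk : m = k := le_antisymm hm h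
      rw [hmk, hpk]; exact hy
  have hpadj : ∀ m, m < k → (p m i - p (m+1) i).natAbs + (p m j - p (m+1) j).natAbs = 1 :=
    fun m hm => (zadj_iff i j hij _ _).mp (hpstep m hm).2.2
  set a := x j with ha
  set b := y j with hb
  set c := x i with hc
  set mA := min a b with hmA
  set mB := max a b with hmB
  have hmm : (mA = a ∧ mB = b) ∨ (mA = b ∧ mB = a) := by
    rcases le_total a b with h | h
    · exact Or.inl ⟨min_eq_left h, max_eq_right h⟩
    · exact Or.inr ⟨min_eq_right h, max_eq_left h⟩
  have hord : mA ≤ mB := min_le_max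
  have h0i : p 0 i = c := by rw [hp0]
  have h0j : p 0 j = a := by rw [hp0]
  have hki : p k i = c := by rw [hpk, ← hline]
  have hkj : p k j = b := by rw [hpk]
  have hbnd : ∀ m, m ≤ k → (p m i - c).natAbs ≤ k ∧ (p m j - a).natAbs ≤ k := by
    intro m hm
    have h := path_bound i j p k hpadj m hm
    rw [h0i, h0j] at h
    omega
  -- the key sets
  set Gf : Vtx 2 → ZMod 2 := GG i j p k mA mB c with hGf
  set Seg : Set (Vtx 2) := {u | u i = c ∧ mA ≤ u j ∧ u j ≤ mB} with hSeg
  set Wp : Set (Vtx 2) := {u | Gf u = 1 ∧ u ∉ M ∧ u ∉ Seg} with hWp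
  set D : Set (Vtx 2) := (Seg \ M) ∪ Wp with hD
  set Fs : Set (Vtx 2) := M ∪ D with hFs
  have hz01 : ∀ g : ZMod 2, ¬ g = 1 → g = 0 := by decide
  have hDM : ∀ u, u ∈ D → u ∉ M := by
    intro u hu
    rcases hu with h | h
    · exact h.2
    · exact h.2.1
  -- endpoints of the segment are x and y
  have hendA : mkp i j c mA = x ∨ mkp i j c mA = y := by
    rcases hmm with ⟨h1, _⟩ | ⟨h1, _⟩
    · left; exact vext i j hij (by rw [mkp_i]) (by rw [mkp_j i j hij, h1])
    · right; exact vext i j hij (by rw [mkp_i, hline]) (by rw [mkp_j i j hij, h1])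
  have hendB : mkp i j c mB = x ∨ mkp i j c mB = y := by
    rcases hmm with ⟨_, h2⟩ | ⟨_, h2⟩
    · right; exact vext i j hij (by rw [mkp_i, hline]) (by rw [mkp_j i j hij, h2])
    · left; exact vext i j hij (by rw [mkp_i]) (by rw [mkp_j i j hij, h2])
  have hendAM : mkp i j c mA ∈ M := by rcases hendA with h | h <;> rw [h] <;> assumption
  have hendBM : mkp i j c mB ∈ M := by rcases hendB with h | h <;> rw [h] <;> assumption
  -- free step lemma
  have hstepfree : ∀ u v : Vtx 2, ZAdj u v → u ∉ M → v ∉ M → u ∉ Seg → v ∉ Seg →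
      Gf u = Gf v := by
    intro u v hadj huM hvM huS hvS
    have hco := (zadj_iff i j hij u v).mp hadj
    have hcases : (u i = v i ∧ (v j = u j + 1 ∨ u j = v j + 1)) ∨
        (u j = v j ∧ (v i = u i + 1 ∨ u i = v i + 1)) := by omega
    have hnotM : ∀ w : Vtx 2, w ∉ M → ∀ m, m ≤ k → ¬(p m i = w i ∧ p m j = w j) := by
      intro w hwM m hm hcoords
      exact hwM (vext i j hij hcoords.1 hcoords.2 ▸ hpmem m hm)
    have hnotSeg : ∀ w : Vtx 2, w ∉ Seg → ¬(w i = c ∧ mA ≤ w j ∧ w j ≤ mB) := by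
      intro w hwS hco'
      exact hwS (by rw [hSeg]; exact hco')
    rcases hcases with ⟨h1, h2 | h2⟩ | ⟨h1, h2 | h2⟩
    · exact G_hstep i j p k hpadj a b c mA mB hmm hord h0i h0j hki hkj u v h1.symm h2
        (fun m hm hcm => hnotM v hvM m hm ⟨by omega, by omega⟩)
    · exact (G_hstep i j p k hpadj a b c mA mB hmm hord h0i h0j hki hkj v u h1 h2
        (fun m hm hcm => hnotM u huM m hm ⟨by omega, by omega⟩)).symm
    · refine G_vstep i j p k mA mB c u v h2 h1.symm
        (fun m hm hcm => hnotM v hvM m hm ⟨by omega, by omega⟩) ?_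
      intro hcs
      exact hnotSeg v hvS ⟨by omega, by omega, by omega⟩
    · refine (G_vstep i j p k mA mB c v u h2 h1
        (fun m hm hcm => hnotM u huM m hm ⟨by omega, by omega⟩) ?_).symm
      intro hcs
      exact hnotSeg u huS ⟨by omega, by omega, by omega⟩
  have hWclosed : ∀ u, u ∈ Wp → ∀ v, ZAdj u v → v ∉ M → v ∉ Seg → v ∈ Wp := by
    intro u hu v hadj hvM hvS
    obtain ⟨hG1, huM, huS⟩ := hu
    exact ⟨(hstepfree u v hadj huM hvM huS hvS) ▸ hG1, hvM, hvS⟩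
  -- gap parity
  have hgltB : ∀ g, g ∈ Seg \ M → g j < mB := by
    rintro g ⟨⟨hgi, hgj1, hgj2⟩, hgM⟩
    rcases eq_or_lt_of_le hgj2 with h | h
    · exfalso
      have : g = mkp i j c mB := vext i j hij (by rw [mkp_i, hgi]) (by rw [mkp_j i j hij, h])
      exact hgM (this ▸ hendBM)
    · exact h
  have hggtA : ∀ g, g ∈ Seg \ M → mA < g j := by
    rintro g ⟨⟨hgi, hgj1, hgj2⟩, hgM⟩
    rcases eq_or_lt_of_le hgj1 with h | h
    · exfalso
      have : g = mkp i j c mA := vext i j hij (by rw [mkp_i, hgi]) (by rw [mkp_j i j hij, ← h])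
      exact hgM (this ▸ hendAM)
    · exact h
  have hgapw : ∀ g, g ∈ Seg \ M → mkp i j (c+1) (g j) ∉ M →
      Gf (mkp i j (c+1) (g j)) = Gf (mkp i j (c-1) (g j)) + 1 := by
    intro g hg hup
    obtain ⟨⟨hgi, hgj1, hgj2⟩, hgM⟩ := hg
    refine G_gap i j p k mA mB c g _ _ hgj1 (hgltB g ⟨⟨hgi, hgj1, hgj2⟩, hgM⟩)
      (mkp_i i j _ _) (mkp_j i j hij _ _) (mkp_i i j _ _) (mkp_j i j hij _ _) ?_ ?_
    · intro m hm hcm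
      have hpe : p m = g := vext i j hij (by rw [hcm.1, hgi]) hcm.2
      exact hgM (hpe ▸ hpmem m hm)
    · intro m hm hcm
      have hpe : p m = mkp i j (c+1) (g j) :=
        vext i j hij (by rw [hcm.1, mkp_i]) (by rw [hcm.2, mkp_j i j hij])
      exact hup (hpe ▸ hpmem m hm)
  -- finiteness
  have hWrow : ∀ u, u ∈ Wp → c - k ≤ u i ∧ u i ≤ c + k ∧ a - k - 1 ≤ u j ∧ u j ≤ a + k :=
    fun u hu => G_one_bounded i j hij p k hpadj a b c mA mB hmm hord h0i h0j hki hkj hbnd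
      u hu.1
  have hWfin : Wp.Finite := by
    apply (box_finite i j hij (c - k) (c + k) (a - k - 1) (a + k)).subset
    intro u hu
    exact hWrow u hu
  have hAfin : (Seg \ M).Finite := by
    apply (box_finite i j hij c c mA mB).subset
    rintro u ⟨⟨h1, h2, h3⟩, _⟩
    exact ⟨le_of_eq h1.symm, le_of_eq h1, h2, h3⟩
  have hDfin : D.Finite := hAfin.union hWfin
  -- z is a gap
  have hzSeg : z ∈ Seg \ M := ⟨⟨hzi, hz1, hz2⟩, hzM⟩
  -- the distinguished removed edge
  have hfind_ex : ∃ n : ℕ, mkp i j c (z j - n) ∈ M := by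
    refine ⟨(z j - mA).toNat, ?_⟩
    have hcast : ((z j - mA).toNat : ℤ) = z j - mA := Int.toNat_of_nonneg (by omega)
    rw [hcast, show z j - (z j - mA) = mA by ring]
    exact hendAM
  have hnspec : mkp i j c (z j - Nat.find hfind_ex) ∈ M := Nat.find_spec hfind_ex
  have hnle : ((Nat.find hfind_ex : ℕ) : ℤ) ≤ z j - mA := by
    have h1 : Nat.find hfind_ex ≤ (z j - mA).toNat := Nat.find_min' hfind_ex (by
      have hcast : ((z j - mA).toNat : ℤ) = z j - mA := Int.toNat_of_nonneg (by omega)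
      rw [hcast, show z j - (z j - mA) = mA by ring]
      exact hendAM)
    omega
  have hn1 : 1 ≤ Nat.find hfind_ex := by
    rcases Nat.eq_zero_or_pos (Nat.find hfind_ex) with h | h
    · exfalso
      rw [h] at hnspec
      have heq : mkp i j c (z j - ((0:ℕ):ℤ)) = z := by
        refine vext i j hij ?_ ?_
        · rw [mkp_i, hzi]
        · rw [mkp_j i j hij]; push_cast; ring
      exact hzM (heq ▸ hnspec)
    · exact h
  have hgstM : mkp i j c (z j - Nat.find hfind_ex + 1) ∉ M := by
    have hmin := Nat.find_min hfind_ex (show Nat.find hfind_ex - 1 < Nat.find hfind_ex by omega)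
    intro hmem
    apply hmin
    have hcast : ((Nat.find hfind_ex - 1 : ℕ) : ℤ) = (Nat.find hfind_ex : ℤ) - 1 := by omega
    have harg : z j - ((Nat.find hfind_ex - 1 : ℕ) : ℤ) = z j - Nat.find hfind_ex + 1 := by
      rw [hcast]; ring
    rw [harg]
    exact hmem
  have hgstSeg : mkp i j c (z j - Nat.find hfind_ex + 1) ∈ Seg := by
    rw [hSeg]
    refine ⟨mkp_i i j _ _, ?_, ?_⟩ <;> rw [mkp_j i j hij] <;> omega
  have hestar_rem : (mkp i j c (z j - Nat.find hfind_ex),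
      mkp i j c (z j - Nat.find hfind_ex + 1)) ∈
      ({e | ZAdj e.1 e.2 ∧ e.1 ∈ M ∧ e.2 ∈ D} : Set (Vtx 2 × Vtx 2)) := by
    refine ⟨?_, hnspec, Or.inl ⟨hgstSeg, hgstM⟩⟩
    show ZAdj (mkp i j c (z j - Nat.find hfind_ex)) (mkp i j c (z j - Nat.find hfind_ex + 1))
    rw [zadj_iff i j hij, mkp_i, mkp_i, mkp_j i j hij, mkp_j i j hij]
    omega
  -- the exchange sets
  set Rem : Set (Vtx 2 × Vtx 2) := {e | ZAdj e.1 e.2 ∧ e.1 ∈ M ∧ e.2 ∈ D} with hRem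
  set Add : Set (Vtx 2 × Vtx 2) := {e | ZAdj e.1 e.2 ∧ e.1 ∈ Seg \ M ∧ e.2 ∉ Fs ∧
    (e.2 = mkp i j (c+1) (e.1 j) ∨ e.2 = mkp i j (c-1) (e.1 j))} with hAdd
  have hRemFin : Rem.Finite := by
    apply (edges_into_finite i j hij D hDfin).subset
    rintro e ⟨h1, _, h3⟩
    exact ⟨h1, h3⟩
  have hAddFin : Add.Finite := by
    apply (edges_from_finite i j hij (Seg \ M) hAfin).subset
    rintro e ⟨h1, h2, _⟩
    exact ⟨h1, h2⟩
  set X : Set (Vtx 2 × Vtx 2) := dirBdry M ∩ dirE D with hX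
  have hXfin : X.Finite := by
    have hclos : (clos D).Finite := by
      apply (hDfin.union (nb_finite i j hij D hDfin)).subset
      rintro u (h | h)
      · exact Or.inl h
      · exact Or.inr h.2
    apply (hclos.prod hclos).subset
    rintro e ⟨_, _, h2, h3, _⟩
    exact ⟨h2, h3⟩
  have hRemX : Rem ⊆ X := by
    rintro e ⟨h1, h2, h3⟩
    refine ⟨⟨h1, h2, hDM e.2 h3⟩, h1, ?_, Or.inl h3, Or.inr h3⟩
    by_cases h : e.1 ∈ D
    · exact Or.inl h
    · exact Or.inr ⟨h, e.2, h3, h1⟩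
  -- not both vertical neighbours of a gap are outside F
  have hnotboth : ∀ g, g ∈ Seg \ M →
      ¬(mkp i j (c+1) (g j) ∉ Fs ∧ mkp i j (c-1) (g j) ∉ Fs) := by
    rintro g hg ⟨hup, hdn⟩
    have hnotF : ∀ r : ℤ, r ≠ c → mkp i j r (g j) ∉ Fs → Gf (mkp i j r (g j)) = 0 := by
      intro r hr hF
      have hM' : mkp i j r (g j) ∉ M := fun h => hF (Or.inl h)
      have hS' : mkp i j r (g j) ∉ Seg := by
        intro hS
        exact hr (by rw [← mkp_i i j r (g j)]; exact hS.1)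
      have hW' : mkp i j r (g j) ∉ Wp := fun h => hF (Or.inr (Or.inr h))
      apply hz01
      intro h1
      exact hW' ⟨h1, hM', hS'⟩
    have hupM : mkp i j (c+1) (g j) ∉ M := fun h => hup (Or.inl h)
    have hgap' := hgapw g hg hupM
    rw [hnotF (c+1) (by omega) hup, hnotF (c-1) (by omega) hdn] at hgap'
    exact absurd hgap' (by decide)
  -- membership of the boundary of F
  have hBsub : dirBdry Fs ∩ dirE D ⊆ ((X \ Rem) ∪ Add) := by
    rintro e ⟨⟨hZ, h1, h2⟩, hE⟩
    by_cases hM1 : e.1 ∈ M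
    · refine Or.inl ⟨⟨⟨hZ, hM1, fun hm => h2 (Or.inl hm)⟩, hE⟩, ?_⟩
      rintro ⟨_, _, h3⟩
      exact h2 (Or.inr h3)
    · have he1D : e.1 ∈ D := by
        rcases h1 with h | h
        · exact absurd h hM1
        · exact h
      have he2M : e.2 ∉ M := fun h => h2 (Or.inl h)
      have he2D : e.2 ∉ D := fun h => h2 (Or.inr h)
      have he2S : e.2 ∉ Seg := fun h => he2D (Or.inl ⟨h, he2M⟩)
      have he2W : e.2 ∉ Wp := fun h => he2D (Or.inr h)
      rcases he1D with he1A | he1W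
      · -- e.1 is a gap
        right
        have hAlt : mA < e.1 j := hggtA e.1 he1A
        have hBgt : e.1 j < mB := hgltB e.1 he1A
        obtain ⟨⟨hgi, hgj1, hgj2⟩, hgM⟩ := he1A
        have hco := (zadj_iff i j hij e.1 e.2).mp hZ
        have hcases : (e.1 i = e.2 i ∧ (e.2 j = e.1 j + 1 ∨ e.1 j = e.2 j + 1)) ∨
            (e.1 j = e.2 j ∧ (e.2 i = e.1 i + 1 ∨ e.1 i = e.2 i + 1)) := by omega
        rcases hcases with ⟨hh1, hh2⟩ | ⟨hh1, hh2 | hh2⟩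
        · exfalso
          apply he2S
          rw [hSeg]
          refine ⟨by omega, by omega, by omega⟩
        · refine ⟨hZ, ⟨⟨hgi, hgj1, hgj2⟩, hgM⟩, h2, Or.inl ?_⟩
          exact vext i j hij (by rw [mkp_i]; omega) (by rw [mkp_j i j hij]; omega)
        · refine ⟨hZ, ⟨⟨hgi, hgj1, hgj2⟩, hgM⟩, h2, Or.inr ?_⟩
          exact vext i j hij (by rw [mkp_i]; omega) (by rw [mkp_j i j hij]; omega)
      · exfalso
        exact he2W (hWclosed e.1 he1W e.2 hZ he2M he2S)
  -- existence of escape times for the climbing map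
  have hexT : ∀ (e : Vtx 2 × Vtx 2), e ∈ Add →
      ∃ t : ℕ, mkp i j (c - (e.2 i - c) * ((t:ℤ) + 2)) (e.1 j) ∉ Wp := by
    intro e he
    refine ⟨k, fun hmem => ?_⟩
    have hrow := (hWrow _ hmem).1
    have hrow2 := (hWrow _ hmem).2.1
    rw [mkp_i] at hrow hrow2
    have hε : e.2 i - c = 1 ∨ e.2 i - c = -1 := by
      rcases he.2.2.2 with h | h <;> rw [h, mkp_i] <;> omega
    rcases hε with h | h <;> rw [h] at hrow hrow2 <;> omega
  -- the injection from added to removed edges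
  set ι : Vtx 2 × Vtx 2 → Vtx 2 × Vtx 2 := fun e =>
    if mkp i j (c - (e.2 i - c)) (e.1 j) ∈ M then
      (mkp i j (c - (e.2 i - c)) (e.1 j), e.1)
    else if hW2 : ∃ t : ℕ, mkp i j (c - (e.2 i - c) * ((t:ℤ) + 2)) (e.1 j) ∉ Wp then
      (mkp i j (c - (e.2 i - c) * ((Nat.find hW2 : ℤ) + 2)) (e.1 j),
       mkp i j (c - (e.2 i - c) * ((Nat.find hW2 : ℤ) + 1)) (e.1 j))
    else e
    with hι
  have hιmain : ∀ e, e ∈ Add → ι e ∈ Rem ∧ (ι e).1 j = e.1 j ∧ (ι e).2 j = e.1 j ∧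
      (ι e).1 j = (ι e).2 j := by
    intro e he
    obtain ⟨hZ, he1A, he2F, hvert⟩ := he
    have he2M : e.2 ∉ M := fun h => he2F (Or.inl h)
    have he2S : e.2 ∉ Seg := by
      intro hS
      exact he2F (Or.inr (Or.inl ⟨hS, he2M⟩))
    have he2W : e.2 ∉ Wp := fun h => he2F (Or.inr (Or.inr h))
    have he2G : Gf e.2 = 0 := hz01 _ (fun h1 => he2W ⟨h1, he2M, he2S⟩)
    have hε : e.2 i - c = 1 ∨ e.2 i - c = -1 := by
      rcases hvert with h | h <;> rw [h, mkp_i] <;> omega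
    have he1ic : e.1 i = c := he1A.1.1
    -- the opposite vertical neighbour lies in W if not in M
    have hoW : mkp i j (c - (e.2 i - c)) (e.1 j) ∉ M →
        mkp i j (c - (e.2 i - c)) (e.1 j) ∈ Wp := by
      intro hoM
      have hoS : mkp i j (c - (e.2 i - c)) (e.1 j) ∉ Seg := by
        intro hS
        have hS1 := hS.1
        rw [mkp_i] at hS1
        rcases hε with h | h <;> omega
      refine ⟨?_, hoM, hoS⟩
      rcases hε with hε1 | hε1
      · -- e.2 is the upper neighbour, o is the lower one
        have he2up : e.2 = mkp i j (c+1) (e.1 j) := by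
          rcases hvert with h | h
          · exact h
          · exfalso
            have : e.2 i = c - 1 := by rw [h, mkp_i]
            omega
        have hupM' : mkp i j (c+1) (e.1 j) ∉ M := by rw [← he2up]; exact he2M
        have hgap' := hgapw e.1 he1A hupM'
        have hGfup : Gf (mkp i j (c+1) (e.1 j)) = 0 := by rw [← he2up]; exact he2G
        rw [hGfup] at hgap'
        have hdn1 : Gf (mkp i j (c-1) (e.1 j)) = 1 := by
          have hh : ∀ t : ZMod 2, (0:ZMod 2) = t + 1 → t = 1 := by decide
          exact hh _ hgap'
        have harg : c - (e.2 i - c) = c - 1 := by omega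
        rw [harg]
        exact hdn1
      · -- e.2 is the lower neighbour, o is the upper one
        have he2dn : e.2 = mkp i j (c-1) (e.1 j) := by
          rcases hvert with h | h
          · exfalso
            have : e.2 i = c + 1 := by rw [h, mkp_i]
            omega
          · exact h
        have harg : c - (e.2 i - c) = c + 1 := by omega
        have hoM' : mkp i j (c+1) (e.1 j) ∉ M := by rw [← harg]; exact hoM
        have hgap' := hgapw e.1 he1A hoM'
        have hGfdn : Gf (mkp i j (c-1) (e.1 j)) = 0 := by rw [← he2dn]; exact he2G
        rw [hGfdn, zero_add] at hgap'
        rw [harg]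
        exact hgap'
    by_cases hM1 : mkp i j (c - (e.2 i - c)) (e.1 j) ∈ M
    · have hie : ι e = (mkp i j (c - (e.2 i - c)) (e.1 j), e.1) := by
        simp only [hι]
        rw [if_pos hM1]
      rw [hie]
      have hadj1 : ZAdj (mkp i j (c - (e.2 i - c)) (e.1 j)) e.1 := by
        rw [zadj_iff i j hij, mkp_i, mkp_j i j hij, he1ic]
        rcases hε with h | h <;> rw [h] <;> omega
      refine ⟨⟨hadj1, hM1, Or.inl he1A⟩, ?_, rfl, ?_⟩
      · exact mkp_j i j hij _ _
      · show mkp i j (c - (e.2 i - c)) (e.1 j) j = e.1 j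
        exact mkp_j i j hij _ _
    · have hW2 : ∃ t : ℕ, mkp i j (c - (e.2 i - c) * ((t:ℤ) + 2)) (e.1 j) ∉ Wp :=
        hexT e ⟨hZ, he1A, he2F, hvert⟩
      have hie : ι e = (mkp i j (c - (e.2 i - c) * ((Nat.find hW2 : ℤ) + 2)) (e.1 j),
          mkp i j (c - (e.2 i - c) * ((Nat.find hW2 : ℤ) + 1)) (e.1 j)) := by
        simp only [hι]
        rw [if_neg hM1, dif_pos hW2]
      rw [hie]
      have hspec : mkp i j (c - (e.2 i - c) * ((Nat.find hW2 : ℤ) + 2)) (e.1 j) ∉ Wp :=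
        Nat.find_spec hW2
      have hlast : mkp i j (c - (e.2 i - c) * ((Nat.find hW2 : ℤ) + 1)) (e.1 j) ∈ Wp := by
        rcases Nat.eq_zero_or_pos (Nat.find hW2) with h0 | h0
        · rw [h0]
          have harg : c - (e.2 i - c) * ((((0:ℕ)):ℤ) + 1) = c - (e.2 i - c) := by
            push_cast; ring
          rw [harg]
          exact hoW hM1
        · have hmin := Nat.find_min hW2 (show Nat.find hW2 - 1 < Nat.find hW2 by omega)
          rw [not_not] at hmin
          have hcast : ((Nat.find hW2 - 1 : ℕ) : ℤ) = (Nat.find hW2 : ℤ) - 1 := by omega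
          have harg : c - (e.2 i - c) * (((Nat.find hW2 - 1 : ℕ) : ℤ) + 2)
              = c - (e.2 i - c) * ((Nat.find hW2 : ℤ) + 1) := by rw [hcast]; ring
          rw [harg] at hmin
          exact hmin
      have hd : c - (e.2 i - c) * ((Nat.find hW2 : ℤ) + 2)
          - (c - (e.2 i - c) * ((Nat.find hW2 : ℤ) + 1)) = -(e.2 i - c) := by ring
      have hadj2 : ZAdj (mkp i j (c - (e.2 i - c) * ((Nat.find hW2 : ℤ) + 2)) (e.1 j))
          (mkp i j (c - (e.2 i - c) * ((Nat.find hW2 : ℤ) + 1)) (e.1 j)) := by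
        rw [zadj_iff i j hij, mkp_i, mkp_i, mkp_j i j hij, mkp_j i j hij]
        omega
      have hexitM : mkp i j (c - (e.2 i - c) * ((Nat.find hW2 : ℤ) + 2)) (e.1 j) ∈ M := by
        by_contra hnM
        apply hspec
        refine hWclosed _ hlast _ ?_ hnM ?_
        · rw [zadj_iff i j hij, mkp_i, mkp_i, mkp_j i j hij, mkp_j i j hij]
          have hd2 : c - (e.2 i - c) * ((Nat.find hW2 : ℤ) + 1)
              - (c - (e.2 i - c) * ((Nat.find hW2 : ℤ) + 2)) = e.2 i - c := by ring
          omega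
        · intro hS
          have hS1 := hS.1
          rw [mkp_i] at hS1
          have hd3 : c - (e.2 i - c) * ((Nat.find hW2 : ℤ) + 2)
              = c - (e.2 i - c) * ((Nat.find hW2 : ℤ)) - (e.2 i - c) - (e.2 i - c) := by ring
          have hd4 : (e.2 i - c) * ((Nat.find hW2 : ℤ)) = (e.2 i - c) * ((Nat.find hW2 : ℤ)) := rfl
          have hmul1 : ∀ (ε T : ℤ), ε = 1 → ε * (T + 2) = T + 2 := by
            intro ε T h; rw [h]; ring
          have hmul2 : ∀ (ε T : ℤ), ε = -1 → ε * (T + 2) = -(T + 2) := by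
            intro ε T h; rw [h]; ring
          rcases hε with h | h
          · have hd5 := hmul1 _ ((Nat.find hW2 : ℤ)) h
            omega
          · have hd5 := hmul2 _ ((Nat.find hW2 : ℤ)) h
            omega
      refine ⟨⟨hadj2, hexitM, Or.inr hlast⟩, ?_, ?_, ?_⟩
      · exact mkp_j i j hij _ _
      · exact mkp_j i j hij _ _
      · show mkp i j _ (e.1 j) j = mkp i j _ (e.1 j) j
        rw [mkp_j i j hij, mkp_j i j hij]
  -- ι is injective on Add
  have hιinj : Set.InjOn ι Add := by
    intro e he e' he' heq
    have h1 := hιmain e he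
    have h2 := hιmain e' he'
    have hjj : e.1 j = e'.1 j := by
      rw [← h1.2.2.1, ← h2.2.2.1, heq]
    have h11 : e.1 = e'.1 := by
      refine vext i j hij ?_ hjj
      rw [he.2.1.1.1, he'.2.1.1.1]
    have h22 : e.2 = e'.2 := by
      rcases he.2.2.2 with ha1 | ha1 <;> rcases he'.2.2.2 with ha2 | ha2
      · rw [ha1, ha2, hjj]
      · exfalso
        apply hnotboth e.1 he.2.1
        constructor
        · rw [← ha1]; exact he.2.2.1
        · rw [hjj, ← ha2]; exact he'.2.2.1
      · exfalso
        apply hnotboth e.1 he.2.1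
        constructor
        · rw [hjj, ← ha2]; exact he'.2.2.1
        · rw [← ha1]; exact he.2.2.1
      · rw [ha1, ha2, hjj]
    exact Prod.ext_iff.mpr ⟨h11, h22⟩
  -- ι never hits the distinguished edge
  have hestarRem : (mkp i j c (z j - Nat.find hfind_ex),
      mkp i j c (z j - Nat.find hfind_ex + 1)) ∈ Rem := hestar_rem
  have hιne : ∀ e, e ∈ Add → ι e ≠ (mkp i j c (z j - Nat.find hfind_ex),
      mkp i j c (z j - Nat.find hfind_ex + 1)) := by
    intro e he hcontra
    have h1 := (hιmain e he).2.2.2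
    rw [hcontra] at h1
    have h1' : (z j - (Nat.find hfind_ex : ℤ)) = z j - Nat.find hfind_ex + 1 := by
      have ha1 : (mkp i j c (z j - Nat.find hfind_ex),
          mkp i j c (z j - Nat.find hfind_ex + 1)).1 j = z j - Nat.find hfind_ex :=
        mkp_j i j hij _ _
      have ha2 : (mkp i j c (z j - Nat.find hfind_ex),
          mkp i j c (z j - Nat.find hfind_ex + 1)).2 j = z j - Nat.find hfind_ex + 1 :=
        mkp_j i j hij _ _
      rw [ha1, ha2] at h1
      exact h1
    omega
  -- counting
  have hcard1 : Add.ncard ≤ (Rem \ {(mkp i j c (z j - Nat.find hfind_ex),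
      mkp i j c (z j - Nat.find hfind_ex + 1))}).ncard := by
    refine Set.ncard_le_ncard_of_injOn ι ?_ hιinj ((hRemFin.subset Set.diff_subset))
    intro e he
    exact ⟨(hιmain e he).1, by simpa using hιne e he⟩
  have hcard2 : (Rem \ {(mkp i j c (z j - Nat.find hfind_ex),
      mkp i j c (z j - Nat.find hfind_ex + 1))}).ncard < Rem.ncard :=
    Set.ncard_diff_singleton_lt_of_mem hestarRem hRemFin
  have hcard3 : Add.ncard < Rem.ncard := lt_of_le_of_lt hcard1 hcard2
  have hRemLeX : Rem.ncard ≤ X.ncard := Set.ncard_le_ncard hRemX hXfin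
  have hdiff : (X \ Rem).ncard = X.ncard - Rem.ncard :=
    Set.ncard_diff hRemX (hXfin.subset hRemX)
  have hmain : (dirBdry Fs ∩ dirE D).ncard < X.ncard := by
    calc (dirBdry Fs ∩ dirE D).ncard ≤ ((X \ Rem) ∪ Add).ncard :=
          Set.ncard_le_ncard hBsub (((hXfin.subset Set.diff_subset)).union hAddFin)
      _ ≤ (X \ Rem).ncard + Add.ncard := Set.ncard_union_le _ _
      _ < X.ncard := by omega
  -- contradiction with minimality
  have hsub : symmDiff Fs M ⊆ D := by
    intro u hu
    rw [Set.mem_symmDiff] at hu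
    rcases hu with ⟨h1, h2⟩ | ⟨h1, h2⟩
    · rcases h1 with h | h
      · exact absurd h h2
      · exact h
    · exact absurd (Or.inl h1) h2
  have := hM D hDfin Fs hsub
  rw [← hX] at this
  omega
end

section
/- Let M be a minimal subgraph of ℤ². Suppose there is a finite simple path in M lying (weakly) on one side of a horizontal or vertical line l, with both endpoints of the path on l. Then every lattice point in the bounded region enclosed by l and the path belongs to M. -/
open Set

/-- Embedding of lattice points into the real plane. -/
def toR (z : Vtx 2) : Fin 2 → ℝ := fun i => (z i : ℝ)

namespace ERIM

def oth (e : Fin 2) : Fin 2 := if e = 0 then 1 else 0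

lemma oth_ne (e : Fin 2) : oth e ≠ e := by fin_cases e <;> decide

lemma eq_or_eq_oth (i e : Fin 2) : i = e ∨ i = oth e := by
  fin_cases i <;> fin_cases e <;> decide

lemma sum_two (f : Fin 2 → ℕ) (e : Fin 2) : ∑ i, f i = f e + f (oth e) := by
  fin_cases e <;> simp [Fin.sum_univ_two, oth] <;> ring

lemma zadj_cases {a b : Vtx 2} (h : ZAdj a b) :
    ∃ e, (a e - b e).natAbs = 1 ∧ a (oth e) = b (oth e) := by
  unfold ZAdj at h
  rw [sum_two (fun i => (a i - b i).natAbs) 0] at h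
  rcases Nat.add_eq_one_iff.mp h with ⟨h1, h2⟩ | ⟨h1, h2⟩
  · refine ⟨oth 0, by simpa using h2, ?_⟩
    have ho : oth (oth 0) = 0 := rfl
    rw [ho]
    omega
  · exact ⟨0, h1, by omega⟩

lemma zadj_of {a b : Vtx 2} (e : Fin 2) (h1 : (a e - b e).natAbs = 1)
    (h2 : a (oth e) = b (oth e)) : ZAdj a b := by
  unfold ZAdj
  rw [sum_two (fun i => (a i - b i).natAbs) e]
  simp only [h1, h2]
  omega

lemma zadj_symm {n : ℕ} {a b : Vtx n} (h : ZAdj a b) : ZAdj b a := by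
  unfold ZAdj at *
  rw [← h]
  congr 1; funext i
  omega

lemma seg_param {u w : Vtx 2} {p : Fin 2 → ℝ} (h : p ∈ segment ℝ (toR u) (toR w)) :
    ∃ t : ℝ, 0 ≤ t ∧ t ≤ 1 ∧ ∀ i, p i = (1 - t) * (u i : ℝ) + t * (w i : ℝ) := by
  obtain ⟨A, B, hA, hB, hAB, heq⟩ := h
  refine ⟨B, hB, by linarith, fun i => ?_⟩
  have h2 := congrFun heq i
  simp only [Pi.add_apply, Pi.smul_apply, smul_eq_mul, toR] at h2
  rw [← h2]
  have h3 : A = 1 - B := by linarith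
  rw [h3]

lemma seg_of_param {u w : Vtx 2} {p : Fin 2 → ℝ} {t : ℝ} (h0 : 0 ≤ t) (h1 : t ≤ 1)
    (h : ∀ i, p i = (1 - t) * (u i : ℝ) + t * (w i : ℝ)) : p ∈ segment ℝ (toR u) (toR w) :=
  ⟨1 - t, t, by linarith, h0, by ring, by funext i; simp [toR, Pi.add_apply, (h i).symm]⟩

lemma lattice_on_adj_seg {u w y : Vtx 2} (huw : ZAdj u w)
    (h : toR y ∈ segment ℝ (toR u) (toR w)) : y = u ∨ y = w := by
  obtain ⟨e, he1, he2⟩ := zadj_cases huw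
  obtain ⟨t, ht0, ht1, hp⟩ := seg_param h
  simp only [toR] at hp
  have hye := hp e
  have hyo := hp (oth e)
  have hoth : y (oth e) = u (oth e) := by
    have : (y (oth e) : ℝ) = u (oth e) := by rw [hyo, he2]; ring
    exact_mod_cast this
  have hbet : u e ≤ y e ∧ y e ≤ w e ∨ w e ≤ y e ∧ y e ≤ u e := by
    rcases le_total (u e) (w e) with hle | hle
    · left
      have hle' : (u e : ℝ) ≤ w e := by exact_mod_cast hle
      constructor
      · exact_mod_cast (by nlinarith : (u e : ℝ) ≤ (y e : ℝ))
      · exact_mod_cast (by nlinarith : (y e : ℝ) ≤ (w e : ℝ))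
    · right
      have hle' : (w e : ℝ) ≤ u e := by exact_mod_cast hle
      constructor
      · exact_mod_cast (by nlinarith : (w e : ℝ) ≤ (y e : ℝ))
      · exact_mod_cast (by nlinarith : (y e : ℝ) ≤ (u e : ℝ))
  have : y e = u e ∨ y e = w e := by omega
  rcases this with h' | h'
  · left; funext i
    rcases eq_or_eq_oth i e with rfl | rfl
    exacts [h', hoth]
  · right; funext i
    rcases eq_or_eq_oth i e with rfl | rfl
    exacts [h', hoth.trans he2]


lemma mem_axis_seg_le {u w y : Vtx 2} (e : Fin 2) (huw : u (oth e) = w (oth e))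
    (hyf : y (oth e) = u (oth e)) (h1 : u e ≤ y e) (h2 : y e ≤ w e) :
    toR y ∈ segment ℝ (toR u) (toR w) := by
  by_cases heq : u e = w e
  · have hy : y = u := by
      funext i
      rcases eq_or_eq_oth i e with rfl | rfl
      · omega
      · exact hyf
    rw [hy]
    exact left_mem_segment ℝ (toR u) (toR w)
  · have hlt : u e < w e := by omega
    have hne : ((w e - u e : ℤ) : ℝ) ≠ 0 := by
      have : (0:ℤ) < w e - u e := by omega
      positivity
    refine seg_of_param (t := ((y e - u e : ℤ):ℝ) / ((w e - u e : ℤ):ℝ)) ?_ ?_ ?_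
    · apply div_nonneg
      · exact_mod_cast (by omega : (0:ℤ) ≤ y e - u e)
      · exact_mod_cast (by omega : (0:ℤ) ≤ w e - u e)
    · rw [div_le_one (by exact_mod_cast (by omega : (0:ℤ) < w e - u e))]
      exact_mod_cast (by omega : y e - u e ≤ w e - u e)
    · intro i
      rcases eq_or_eq_oth i e with rfl | rfl
      · simp only [toR]
        have hne' : ((w i : ℝ)) - ((u i : ℝ)) ≠ 0 := by
          push_cast at hne
          exact hne
        push_cast
        field_simp [hne']
        ring
      · simp only [toR, hyf, huw]
        push_cast
        ring

lemma mem_axis_seg {u w y : Vtx 2} (e : Fin 2) (huw : u (oth e) = w (oth e))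
    (hyf : y (oth e) = u (oth e))
    (hbet : (u e ≤ y e ∧ y e ≤ w e) ∨ (w e ≤ y e ∧ y e ≤ u e)) :
    toR y ∈ segment ℝ (toR u) (toR w) := by
  rcases hbet with ⟨h1, h2⟩ | ⟨h1, h2⟩
  · exact mem_axis_seg_le e huw hyf h1 h2
  · rw [segment_symm]
    exact mem_axis_seg_le e huw.symm (hyf.trans huw) h1 h2

lemma segInt {a b u w : Vtx 2} (hab : ZAdj a b) (f : Fin 2) (huw : u f = w f)
    {p : Fin 2 → ℝ} (hp1 : p ∈ segment ℝ (toR a) (toR b))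
    (hp2 : p ∈ segment ℝ (toR u) (toR w)) :
    toR a ∈ segment ℝ (toR u) (toR w) ∨ toR b ∈ segment ℝ (toR u) (toR w) := by
  obtain ⟨e, he1, he2⟩ := zadj_cases hab
  obtain ⟨t, ht0, ht1, hP1⟩ := seg_param hp1
  obtain ⟨s, hs0, hs1, hP2⟩ := seg_param hp2
  rcases eq_or_eq_oth f e with rfl | rfl
  · -- perpendicular case: the intersection point is a lattice point
    have hpe : p f = (u f : ℝ) := by rw [hP2 f, huw]; ring
    have hpo : p (oth f) = (a (oth f) : ℝ) := by rw [hP1 (oth f), he2]; ring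
    have hpq : p = toR (fun i => if i = f then u f else a (oth f)) := by
      funext i
      rcases eq_or_eq_oth i f with rfl | rfl
      · simpa [toR] using hpe
      · simp only [toR, if_neg (oth_ne f)]
        exact hpo
    have hq1 : toR (fun i => if i = f then u f else a (oth f)) ∈ segment ℝ (toR a) (toR b) := by
      rw [← hpq]; exact hp1
    rcases lattice_on_adj_seg hab hq1 with h | h
    · left; rw [← h, ← hpq]; exact hp2
    · right; rw [← h, ← hpq]; exact hp2
  · -- parallel case
    have hafR : (a (oth e) : ℝ) = (u (oth e) : ℝ) := by
      have hh1 : p (oth e) = (a (oth e):ℝ) := by rw [hP1 (oth e), ← he2]; ring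
      have hh2 : p (oth e) = (u (oth e):ℝ) := by rw [hP2 (oth e), ← huw]; ring
      rw [← hh1, hh2]
    have hafZ : a (oth e) = u (oth e) := by exact_mod_cast hafR
    have hAB : ((min (a e) (b e) : ℤ):ℝ) ≤ p e ∧ p e ≤ ((max (a e) (b e) : ℤ):ℝ) := by
      rw [hP1 e]
      constructor
      · rcases le_total (a e) (b e) with h | h
        · rw [min_eq_left h]
          have hc : (a e:ℝ) ≤ (b e : ℝ) := by exact_mod_cast h
          nlinarith
        · rw [min_eq_right h]
          have hc : (b e:ℝ) ≤ (a e : ℝ) := by exact_mod_cast h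
          nlinarith
      · rcases le_total (a e) (b e) with h | h
        · rw [max_eq_right h]
          have hc : (a e:ℝ) ≤ (b e : ℝ) := by exact_mod_cast h
          nlinarith
        · rw [max_eq_left h]
          have hc : (b e:ℝ) ≤ (a e : ℝ) := by exact_mod_cast h
          nlinarith
    have hUW : ((min (u e) (w e) : ℤ):ℝ) ≤ p e ∧ p e ≤ ((max (u e) (w e) : ℤ):ℝ) := by
      rw [hP2 e]
      constructor
      · rcases le_total (u e) (w e) with h | h
        · rw [min_eq_left h]
          have hc : (u e:ℝ) ≤ (w e : ℝ) := by exact_mod_cast h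
          nlinarith
        · rw [min_eq_right h]
          have hc : (w e:ℝ) ≤ (u e : ℝ) := by exact_mod_cast h
          nlinarith
      · rcases le_total (u e) (w e) with h | h
        · rw [max_eq_right h]
          have hc : (u e:ℝ) ≤ (w e : ℝ) := by exact_mod_cast h
          nlinarith
        · rw [max_eq_left h]
          have hc : (w e:ℝ) ≤ (u e : ℝ) := by exact_mod_cast h
          nlinarith
    have i1 : min (u e) (w e) ≤ max (a e) (b e) := by exact_mod_cast le_trans hUW.1 hAB.2
    have i2 : min (a e) (b e) ≤ max (u e) (w e) := by exact_mod_cast le_trans hAB.1 hUW.2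
    have hr : ∃ r : ℤ, (r = a e ∨ r = b e) ∧
        ((u e ≤ r ∧ r ≤ w e) ∨ (w e ≤ r ∧ r ≤ u e)) := by
      have hd : (min (u e) (w e) ≤ min (a e) (b e) ∧ min (a e) (b e) ≤ max (u e) (w e)) ∨
          (min (u e) (w e) ≤ max (a e) (b e) ∧ max (a e) (b e) ≤ max (u e) (w e)) := by
        omega
      rcases hd with ⟨hx, hy⟩ | ⟨hx, hy⟩
      · exact ⟨min (a e) (b e), by omega, by omega⟩
      · exact ⟨max (a e) (b e), by omega, by omega⟩
    obtain ⟨r, hr1, hr2⟩ := hr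
    rcases hr1 with rfl | rfl
    · left
      exact mem_axis_seg e huw hafZ hr2
    · right
      exact mem_axis_seg e huw (by rw [← he2]; exact hafZ) hr2


lemma box_finite (N : ℤ) : {y : Vtx 2 | ∀ i, -N ≤ y i ∧ y i ≤ N}.Finite := by
  apply Set.Finite.subset (Set.Finite.pi (fun _ : Fin 2 => Set.finite_Icc (-N) N))
  intro y hy
  simp only [Set.mem_pi, Set.mem_univ, Set.mem_Icc, forall_true_left]
  intro i
  exact ⟨(hy i).1, (hy i).2⟩

lemma zadj_coord_le {a b : Vtx 2} (h : ZAdj a b) (i : Fin 2) : (a i - b i).natAbs ≤ 1 := by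
  unfold ZAdj at h
  rw [sum_two (fun j => (a j - b j).natAbs) i] at h
  omega

lemma nbrs_finite (a : Vtx 2) : {b : Vtx 2 | ZAdj b a}.Finite := by
  apply Set.Finite.subset (box_finite ((a 0).natAbs + (a 1).natAbs + 1))
  intro b hb
  intro i
  have h1 := zadj_coord_le (zadj_symm hb) i
  have h2 : a i = a 0 ∨ a i = a 1 := by
    rcases eq_or_eq_oth i 0 with rfl | rfl
    · left; rfl
    · right; rfl
  omega

lemma extB_finite {Ω : Set (Vtx 2)} (h : Ω.Finite) : (extB Ω).Finite := by
  apply Set.Finite.subset (Set.Finite.biUnion h (fun w _ => nbrs_finite w))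
  rintro z ⟨hz, w, hw, hzw⟩
  exact Set.mem_biUnion hw hzw

lemma latt_in_bounded_finite {U : Set (Fin 2 → ℝ)} (hU : Bornology.IsBounded U) :
    {w : Vtx 2 | toR w ∈ U}.Finite := by
  obtain ⟨R, hR⟩ := (Metric.isBounded_iff_subset_closedBall 0).mp hU
  apply Set.Finite.subset (box_finite ⌈R⌉)
  intro w hw
  have hnorm : ‖toR w‖ ≤ R := by
    have := hR hw
    rwa [Metric.mem_closedBall, dist_zero_right] at this
  intro i
  have h1 : |(w i : ℝ)| ≤ ‖toR w‖ := by
    have := norm_le_pi_norm (toR w) i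
    simpa [toR, Real.norm_eq_abs] using this
  have h2 : |(w i : ℝ)| ≤ (⌈R⌉ : ℝ) := le_trans (le_trans h1 hnorm) (Int.le_ceil R)
  rw [abs_le] at h2
  constructor
  · exact_mod_cast h2.1
  · exact_mod_cast h2.2

lemma exists_top {S : Set (Vtx 2)} (hfin : S.Finite) (g : ℕ → Vtx 2)
    (hginj : Function.Injective g) (hg0 : g 0 ∈ S) :
    ∃ t, (∀ s ≤ t, g s ∈ S) ∧ g (t + 1) ∉ S := by
  set T := {t : ℕ | ∀ s ≤ t, g s ∈ S} with hT
  have hT0 : 0 ∈ T := by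
    intro s hs
    rw [Nat.le_zero.mp hs]
    exact hg0
  have hbdd : BddAbove T := by
    by_contra h
    rw [not_bddAbove_iff] at h
    have hall : ∀ n, g n ∈ S := by
      intro n
      obtain ⟨t, ht, hnt⟩ := h n
      exact ht n hnt.le
    exact (Set.infinite_of_injective_forall_mem hginj hall) hfin
  have hmem : sSup T ∈ T := Nat.sSup_mem ⟨0, hT0⟩ hbdd
  refine ⟨sSup T, hmem, fun hc => ?_⟩
  have hmem2 : sSup T + 1 ∈ T := by
    intro s hs
    by_cases h' : s ≤ sSup T
    · exact hmem s h'
    · have hseq : s = sSup T + 1 := by omega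
      rw [hseq]; exact hc
  have := le_csSup hbdd hmem2
  omega

lemma far_side_unbounded {C : Set (Fin 2 → ℝ)} {c : Fin 2} {v ε : ℤ}
    (hε : ε = 1 ∨ ε = -1)
    (hCside : ∀ p ∈ C, 0 ≤ (ε : ℝ) * (p c - (v : ℝ))) {a : Vtx 2} (ha : toR a ∉ C)
    (hfar : ε * (a c - v) ≤ 0) :
    ¬ Bornology.IsBounded (connectedComponentIn Cᶜ (toR a)) := by
  have hε2 : (ε:ℝ) * ε = 1 := by rcases hε with rfl | rfl <;> norm_num
  set dir : Fin 2 → ℝ := fun i => if i = c then (-(ε:ℝ)) else 0 with hdir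
  set ray := (fun t : ℝ => toR a + t • dir) '' Set.Ici 0 with hray
  have hcoord : ∀ t : ℝ, (toR a + t • dir) c = (a c : ℝ) - t * ε := by
    intro t
    simp [toR, hdir, Pi.add_apply, Pi.smul_apply, smul_eq_mul]
    ring
  have hraysub : ray ⊆ Cᶜ := by
    rintro p ⟨t, ht, hpt⟩
    have hpt' : toR a + t • dir = p := hpt
    have ht' : (0:ℝ) ≤ t := ht
    intro hpC
    have hge := hCside _ hpC
    rw [← hpt', hcoord t] at hge
    have hfarR : (ε:ℝ) * ((a c : ℝ) - v) ≤ 0 := by exact_mod_cast hfar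
    have ht0 : t = 0 := by nlinarith
    rw [ht0] at hpt'
    simp only [zero_smul, add_zero] at hpt'
    rw [← hpt'] at hpC
    exact ha hpC
  have hpre : IsPreconnected ray :=
    isPreconnected_Ici.image _
      ((continuous_const.add (continuous_id.smul continuous_const)).continuousOn)
  have hmem : toR a ∈ ray := ⟨0, Set.self_mem_Ici, by simp⟩
  have hsub : ray ⊆ connectedComponentIn Cᶜ (toR a) :=
    hpre.subset_connectedComponentIn hmem hraysub
  intro hb
  obtain ⟨R, hR⟩ := (Metric.isBounded_iff_subset_closedBall 0).mp (hb.subset hsub)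
  have hRa : ‖toR a‖ ≤ R := by
    have := hR hmem
    rwa [Metric.mem_closedBall, dist_zero_right] at this
  have hR0 : 0 ≤ R := le_trans (norm_nonneg _) hRa
  set t₀ : ℝ := R + |(a c : ℝ)| + 1 with ht₀
  have ht₀0 : 0 ≤ t₀ := by positivity
  have hmem2 : toR a + t₀ • dir ∈ ray := ⟨t₀, ht₀0, rfl⟩
  have hnorm : ‖toR a + t₀ • dir‖ ≤ R := by
    have := hR hmem2
    rwa [Metric.mem_closedBall, dist_zero_right] at this
  have h1 : |(toR a + t₀ • dir) c| ≤ ‖toR a + t₀ • dir‖ := by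
    have := norm_le_pi_norm (toR a + t₀ • dir) c
    simpa [Real.norm_eq_abs] using this
  rw [hcoord t₀] at h1
  have h2 : |(a c : ℝ) - t₀ * ε| ≥ t₀ - |(a c : ℝ)| := by
    have h5 : |t₀ * (ε:ℝ)| = t₀ := by
      rw [abs_mul, abs_of_nonneg ht₀0]
      rcases hε with rfl | rfl <;> norm_num
    calc t₀ - |(a c:ℝ)| = |t₀ * (ε:ℝ)| - |(a c:ℝ)| := by rw [h5]
    _ ≤ |t₀ * (ε:ℝ) - (a c:ℝ)| := abs_sub_abs_le_abs_sub _ _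
    _ = |(a c:ℝ) - t₀ * ε| := abs_sub_comm _ _
  have : t₀ - |(a c : ℝ)| = R + 1 := by rw [ht₀]; ring
  linarith

end ERIM

/-- if a finite simple path in a minimal subgraph `M ⊆ ℤ²` lies weakly on one
side of a horizontal or vertical line `l` with both endpoints on `l`, then every lattice point
of the bounded region enclosed by `l` and the path belongs to `M`. -/
theorem enclosed_region_in_minimal {M : Set (Vtx 2)} (hM : IsMinimal M)
    (k : ℕ) (x : Fin (k + 1) → Vtx 2)
    (hinM : ∀ i, x i ∈ M)
    (hadj : ∀ i : Fin k, ZAdj (x i.castSucc) (x i.succ))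
    (hsimple : ∀ i : Fin (k + 1), ({p : Vtx 2 | (∃ j, x j = p) ∧ ZAdj (x i) p}).ncard ≤ 2)
    -- the line `l = {w | w c = v}` and the side on which the path lies
    (c : Fin 2) (v : ℤ) (ε : ℤ) (hε : ε = 1 ∨ ε = -1)
    (hside : ∀ i, 0 ≤ ε * (x i c - v))
    (h0 : x 0 c = v) (hlast : x (Fin.last k) c = v)
    -- the closed curve formed by the path together with the segment of `l` between the endpoints
    (C : Set (Fin 2 → ℝ))
    (hC : C = (⋃ i : Fin k, segment ℝ (toR (x i.castSucc)) (toR (x i.succ))) ∪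
          segment ℝ (toR (x 0)) (toR (x (Fin.last k)))) :
    ∀ z : Vtx 2, toR z ∉ C →
      Bornology.IsBounded (connectedComponentIn Cᶜ (toR z)) → z ∈ M := by
  intro z hzC hzB
  by_contra hzM
  classical
  have hothoth : ∀ e : Fin 2, ERIM.oth (ERIM.oth e) = e := by decide
  set U := connectedComponentIn Cᶜ (toR z) with hU
  have hUsub : U ⊆ Cᶜ := connectedComponentIn_subset _ _
  have hzU : toR z ∈ U := mem_connectedComponentIn hzC
  set S : Set (Vtx 2) := {w : Vtx 2 | toR w ∈ U} \ M with hS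
  have hSfin : S.Finite := (ERIM.latt_in_bounded_finite hzB).subset Set.diff_subset
  have hzS : z ∈ S := ⟨hzU, hzM⟩
  -- every point of C lies weakly on the ε side of the line
  have hCside : ∀ p ∈ C, 0 ≤ (ε : ℝ) * (p c - (v : ℝ)) := by
    intro p hp
    rw [hC] at hp
    have key : ∀ u w : Vtx 2, 0 ≤ ε * (u c - v) → 0 ≤ ε * (w c - v) →
        p ∈ segment ℝ (toR u) (toR w) → 0 ≤ (ε:ℝ) * (p c - (v:ℝ)) := by
      intro u w hu hw hmem
      obtain ⟨t, ht0, ht1, hp'⟩ := ERIM.seg_param hmem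
      have huR : 0 ≤ (ε:ℝ) * ((u c:ℝ) - (v:ℝ)) := by exact_mod_cast hu
      have hwR : 0 ≤ (ε:ℝ) * ((w c:ℝ) - (v:ℝ)) := by exact_mod_cast hw
      have hc' := hp' c
      have hh1 : 0 ≤ (1 - t) * ((ε:ℝ) * ((u c:ℝ) - (v:ℝ))) := mul_nonneg (by linarith) huR
      have hh2 : 0 ≤ t * ((ε:ℝ) * ((w c:ℝ) - (v:ℝ))) := mul_nonneg ht0 hwR
      rw [hc']
      nlinarith [hh1, hh2]
    rcases hp with hp | hp
    · obtain ⟨i, hi⟩ := Set.mem_iUnion.mp hp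
      exact key _ _ (hside _) (hside _) hi
    · exact key _ _ (hside 0) (hside (Fin.last k)) hp
  -- lattice points of U are strictly on the ε side
  have hLside : ∀ a : Vtx 2, toR a ∈ U → 1 ≤ ε * (a c - v) := by
    intro a ha
    by_contra hcon
    have hfar : ε * (a c - v) ≤ 0 := by
      rcases hε with h | h <;> rw [h] at hcon ⊢ <;> omega
    have haC : toR a ∉ C := hUsub ha
    have hcomp : connectedComponentIn Cᶜ (toR a) = U := by
      rw [hU]
      exact (connectedComponentIn_eq ha).symm
    exact ERIM.far_side_unbounded hε hCside haC hfar (hcomp ▸ hzB)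
  -- key dichotomy: a neighbor of S outside S is either in M or on the line
  have hKey : ∀ a b : Vtx 2, a ∈ S → ZAdj a b → b ∉ S → b ∉ M → b c = v := by
    intro a b haS hab hbS hbM
    have haU : toR a ∈ U := haS.1
    have hbU : toR b ∉ U := fun hbL => hbS ⟨hbL, hbM⟩
    have hmeet : ∃ p, p ∈ segment ℝ (toR a) (toR b) ∧ p ∈ C := by
      by_contra hno
      push_neg at hno
      have hsegsub : segment ℝ (toR a) (toR b) ⊆ Cᶜ := fun p hp => hno p hp
      have hsub2 : segment ℝ (toR a) (toR b) ⊆ connectedComponentIn Cᶜ (toR a) :=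
        ((convex_segment _ _).isPreconnected).subset_connectedComponentIn
          (left_mem_segment ℝ _ _) hsegsub
      have hcomp : connectedComponentIn Cᶜ (toR a) = U := by
        rw [hU]
        exact (connectedComponentIn_eq haU).symm
      exact hbU (hcomp ▸ hsub2 (right_mem_segment ℝ _ _))
    obtain ⟨p, hp1, hp2⟩ := hmeet
    rw [hC] at hp2
    rcases hp2 with hp2 | hp2
    · obtain ⟨i, hi⟩ := Set.mem_iUnion.mp hp2
      obtain ⟨e', _, he'2⟩ := ERIM.zadj_cases (hadj i)
      rcases ERIM.segInt hab (ERIM.oth e') he'2 hp1 hi with h | h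
      · exact absurd (hUsub haU) (by
          simp only [Set.mem_compl_iff, not_not]
          rw [hC]
          exact Or.inl (Set.mem_iUnion.mpr ⟨i, h⟩))
      · rcases ERIM.lattice_on_adj_seg (hadj i) h with h' | h'
        · exact absurd (by rw [h']; exact hinM _) hbM
        · exact absurd (by rw [h']; exact hinM _) hbM
    · have hfc : x 0 c = x (Fin.last k) c := h0.trans hlast.symm
      rcases ERIM.segInt hab c hfc hp1 hp2 with h | h
      · exact absurd (hUsub haU) (by
          simp only [Set.mem_compl_iff, not_not]
          rw [hC]
          exact Or.inr h)
      · obtain ⟨t, _, _, hb'⟩ := ERIM.seg_param h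
        have hbc : (b c : ℝ) = (v : ℝ) := by
          have := hb' c
          rw [h0, hlast] at this
          simp only [toR] at this
          rw [this]
          ring
        exact_mod_cast hbc
  have hIII : ∀ a b : Vtx 2, a ∈ S → ZAdj a b → b ∉ S → b c ≠ v → b ∈ M := by
    intro a b haS hab hbS hbc
    by_contra hbM
    exact hbc (hKey a b haS hab hbS hbM)
  -- column machinery
  set colUp : Vtx 2 → ℕ → Vtx 2 :=
    fun a t => fun i => if i = c then a c + ε * t else a i with hcolUp
  have hcolc : ∀ a t, colUp a t c = a c + ε * t := by intro a t; simp [hcolUp]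
  have hcoloth : ∀ a t, colUp a t (ERIM.oth c) = a (ERIM.oth c) := by
    intro a t
    simp [hcolUp, ERIM.oth_ne c]
  have hcol0 : ∀ a, colUp a 0 = a := by
    intro a
    funext i
    rcases ERIM.eq_or_eq_oth i c with rfl | rfl
    · rw [hcolc]; simp
    · rw [hcoloth]
  have hcolinj : ∀ a, Function.Injective (colUp a) := by
    intro a t1 t2 h
    have := congrFun h c
    rw [hcolc, hcolc] at this
    rcases hε with h | h <;> rw [h] at this <;> omega
  have hcoladj : ∀ a t, ZAdj (colUp a t) (colUp a (t + 1)) := by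
    intro a t
    apply ERIM.zadj_of c
    · rw [hcolc, hcolc]
      rcases hε with h | h <;> rw [h] <;> push_cast <;> omega
    · rw [hcoloth, hcoloth]
  have hex : ∀ a ∈ S, ∃ t, (∀ s ≤ t, colUp a s ∈ S) ∧ colUp a (t + 1) ∉ S := by
    intro a ha
    exact ERIM.exists_top hSfin (colUp a) (hcolinj a) (by rw [hcol0]; exact ha)
  choose! top htop1 htop2 using hex
  -- the competitor set and minimality
  have hsymm : symmDiff (M ∪ S) M ⊆ S := by
    intro w hw
    rcases Set.mem_symmDiff.mp hw with ⟨hwF, hwM⟩ | ⟨hwM, hwF⟩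
    · rcases hwF with h | h
      · exact absurd h hwM
      · exact h
    · exact absurd (Or.inl hwM) hwF
  have hmin := hM S hSfin (M ∪ S) hsymm
  -- characterizations
  have hYchar : dirBdry M ∩ dirE S =
      {p : Vtx 2 × Vtx 2 | ZAdj p.1 p.2 ∧ p.1 ∈ M ∧ p.2 ∈ S} := by
    ext ⟨a, b⟩
    simp only [Set.mem_inter_iff, dirBdry, dirE, clos, extB, Set.mem_setOf_eq, Set.mem_union]
    constructor
    · rintro ⟨⟨hab, haM, hbM⟩, -, -, -, hor⟩
      refine ⟨hab, haM, ?_⟩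
      rcases hor with h | h
      · exact absurd haM h.2
      · exact h
    · rintro ⟨hab, haM, hbS⟩
      refine ⟨⟨hab, haM, hbS.2⟩, hab, ?_, Or.inl hbS, Or.inr hbS⟩
      by_cases h : a ∈ S
      · exact Or.inl h
      · exact Or.inr ⟨h, b, hbS, hab⟩
  have hXchar : dirBdry (M ∪ S) ∩ dirE S =
      {p : Vtx 2 × Vtx 2 | ZAdj p.1 p.2 ∧ p.1 ∈ S ∧ p.2 ∉ M ∧ p.2 ∉ S} := by
    ext ⟨a, b⟩
    simp only [Set.mem_inter_iff, dirBdry, dirE, clos, extB, Set.mem_setOf_eq, Set.mem_union]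
    constructor
    · rintro ⟨⟨hab, haF, hbF⟩, -, -, -, hor⟩
      have hbM : b ∉ M := fun h => hbF (Or.inl h)
      have hbS : b ∉ S := fun h => hbF (Or.inr h)
      refine ⟨hab, ?_, hbM, hbS⟩
      rcases hor with h | h
      · exact h
      · exact absurd h hbS
    · rintro ⟨hab, haS, hbM, hbS⟩
      refine ⟨⟨hab, Or.inr haS, fun h => ?_⟩, hab, Or.inl haS,
        Or.inr ⟨hbS, a, haS, ERIM.zadj_symm hab⟩, Or.inl haS⟩
      rcases h with h | h
      · exact hbM h
      · exact hbS h
  -- finiteness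
  have hclosfin : (clos S).Finite := hSfin.union (ERIM.extB_finite hSfin)
  have hEfin : (dirE S).Finite := by
    apply (hclosfin.prod hclosfin).subset
    rintro ⟨a, b⟩ ⟨_, h2, h3, _⟩
    exact ⟨h2, h3⟩
  have hYfin : (dirBdry M ∩ dirE S).Finite := Set.Finite.inter_of_right hEfin _
  have hXfin : (dirBdry (M ∪ S) ∩ dirE S).Finite := Set.Finite.inter_of_right hEfin _
  -- structure of X-edges
  have hXst : ∀ a b : Vtx 2, (a, b) ∈ dirBdry (M ∪ S) ∩ dirE S →
      a ∈ S ∧ a c = v + ε ∧ b = fun i => if i = c then v else a i := by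
    intro a b hmem
    rw [hXchar] at hmem
    obtain ⟨hab, haS, hbM, hbS⟩ := hmem
    dsimp only at hab haS hbM hbS
    have hbc : b c = v := hKey a b haS hab hbS hbM
    have haside : 1 ≤ ε * (a c - v) := hLside a haS.1
    obtain ⟨e, he1, he2⟩ := ERIM.zadj_cases hab
    rcases ERIM.eq_or_eq_oth e c with hec | hec
    · rw [hec] at he1 he2
      refine ⟨haS, by rcases hε with h | h <;> rw [h] at haside ⊢ <;> omega, ?_⟩
      funext i
      rcases ERIM.eq_or_eq_oth i c with hic | hic
      · rw [hic, if_pos rfl, hbc]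
      · rw [hic, if_neg (ERIM.oth_ne c)]
        exact he2.symm
    · rw [hec, hothoth] at he2
      exfalso
      rw [he2, hbc] at haside
      rcases hε with h | h <;> rw [h] at haside <;> omega
  -- the injection from X-edges to Y-edges
  set φ : Vtx 2 × Vtx 2 → Vtx 2 × Vtx 2 :=
    fun p => (colUp p.1 (top p.1 + 1), colUp p.1 (top p.1)) with hφ
  have hφmem : ∀ p ∈ dirBdry (M ∪ S) ∩ dirE S, φ p ∈ dirBdry M ∩ dirE S := by
    rintro ⟨a, b⟩ hmem
    obtain ⟨haS, hac, _⟩ := hXst a b hmem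
    have ha' : colUp a (top a) ∈ S := htop1 a haS (top a) le_rfl
    have hb' : colUp a (top a + 1) ∉ S := htop2 a haS
    have hb'M : colUp a (top a + 1) ∈ M := by
      apply hIII (colUp a (top a)) _ ha' (hcoladj a (top a)) hb'
      rw [hcolc]
      rcases hε with h | h <;> rw [h] at hac ⊢ <;> push_cast <;> omega
    rw [hYchar]
    exact ⟨ERIM.zadj_symm (hcoladj a (top a)), hb'M, ha'⟩
  have hφinj : Set.InjOn φ (dirBdry (M ∪ S) ∩ dirE S) := by
    rintro ⟨a1, b1⟩ h1 ⟨a2, b2⟩ h2 heq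
    obtain ⟨h1S, h1c, h1b⟩ := hXst a1 b1 h1
    obtain ⟨h2S, h2c, h2b⟩ := hXst a2 b2 h2
    have hsnd := congrArg Prod.snd heq
    simp only [hφ] at hsnd
    have hoth : a1 (ERIM.oth c) = a2 (ERIM.oth c) := by
      have := congrFun hsnd (ERIM.oth c)
      rwa [hcoloth, hcoloth] at this
    have ha : a1 = a2 := by
      funext i
      rcases ERIM.eq_or_eq_oth i c with rfl | rfl
      · rw [h1c, h2c]
      · exact hoth
    have hb : b1 = b2 := by rw [h1b, h2b, ha]
    rw [Prod.ext_iff]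
    exact ⟨ha, hb⟩
  -- the extra Y-edge
  obtain ⟨astar, hastarS, hminstar⟩ :=
    Set.exists_min_image S (fun a => a (ERIM.oth c)) hSfin ⟨z, hzS⟩
  set bstar : Vtx 2 := fun i => if i = ERIM.oth c then astar (ERIM.oth c) - 1 else astar i
    with hbstar
  have hbstaroth : bstar (ERIM.oth c) = astar (ERIM.oth c) - 1 := by simp [hbstar]
  have hbstarc : bstar c = astar c := by
    rw [hbstar]
    simp only
    rw [if_neg (fun h => ERIM.oth_ne c h.symm)]
  have hadjstar : ZAdj astar bstar := by
    apply ERIM.zadj_of (ERIM.oth c)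
    · rw [hbstaroth]; simp
    · rw [hothoth, hbstarc]
  have hbstarS : bstar ∉ S := by
    intro h
    have := hminstar bstar h
    rw [hbstaroth] at this
    omega
  have hbstarM : bstar ∈ M := by
    apply hIII astar _ hastarS hadjstar hbstarS
    rw [hbstarc]
    have hls := hLside astar hastarS.1
    rcases hε with h | h <;> rw [h] at hls <;> omega
  have hystar : (bstar, astar) ∈ dirBdry M ∩ dirE S := by
    rw [hYchar]
    exact ⟨ERIM.zadj_symm hadjstar, hbstarM, hastarS⟩
  have hystarnot : (bstar, astar) ∉ φ '' (dirBdry (M ∪ S) ∩ dirE S) := by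
    rintro ⟨⟨a, b⟩, _, heq⟩
    simp only [hφ, Prod.mk.injEq] at heq
    have e1 := congrFun heq.1 (ERIM.oth c)
    have e2 := congrFun heq.2 (ERIM.oth c)
    rw [hcoloth] at e1 e2
    omega
  -- cardinality contradiction
  have hsubY : insert (bstar, astar) (φ '' (dirBdry (M ∪ S) ∩ dirE S)) ⊆ dirBdry M ∩ dirE S := by
    intro p hp
    rcases Set.mem_insert_iff.mp hp with rfl | ⟨q, hq, rfl⟩
    · exact hystar
    · exact hφmem q hq
  have hcard : (dirBdry (M ∪ S) ∩ dirE S).ncard + 1 ≤ (dirBdry M ∩ dirE S).ncard := by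
    calc (dirBdry (M ∪ S) ∩ dirE S).ncard + 1
        = (φ '' (dirBdry (M ∪ S) ∩ dirE S)).ncard + 1 := by
          rw [Set.ncard_image_of_injOn hφinj]
      _ = (insert (bstar, astar) (φ '' (dirBdry (M ∪ S) ∩ dirE S))).ncard :=
          (Set.ncard_insert_of_notMem hystarnot (hXfin.image φ)).symm
      _ ≤ (dirBdry M ∩ dirE S).ncard := Set.ncard_le_ncard hsubY hYfin
  omega
end
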